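/- arXiv:1204.6148 — 5 statements merged into one kernel-verified Lean document; each statement's English description precedes it below -/
import Mathlib

section
/- Let (S_n) be a random walk on ℤ started at x ≥ 0 whose increments are i.i.d., and suppose limsup_n S_n = +∞ almost surely. Let V^-(x) = Σ_{k≥0} P(H_k^- ≤ x) be the weak descending ladder height renewal function. Then V^- is harmonic for the walk killed upon entering (−∞, 0): for every x ≥ 0 and N ∈ ℕ, V^-(x) = E_x[ V^-(S_N) 1{S_1 ≥ 0, ..., S_N ≥ 0} ]. -/
open MeasureTheory ProbabilityTheory Filter
open scoped ENNReal

/-- The random walk `S n = X 0 + ⋯ + X (n-1)` started at `0`. -/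
noncomputable def rwS {Ω : Type*} (X : ℕ → Ω → ℝ) (n : ℕ) (ω : Ω) : ℝ :=
  ∑ i ∈ Finset.range n, X i ω

/-- The weak descending renewal function `V⁻(x) = Σ_k P(H_k⁻ ≤ x)`, written as the sum over
`n` of the probability that `n` is a weak descending ladder epoch with `-S n ≤ x`. -/
noncomputable def Vminus {Ω : Type*} [MeasurableSpace Ω] (P : Measure Ω)
    (X : ℕ → Ω → ℝ) (x : ℝ) : ℝ≥0∞ :=
  ∑' n : ℕ, P {ω | (∀ j, j < n → rwS X n ω ≤ rwS X j ω) ∧ -rwS X n ω ≤ x}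

/-!
The statement depends only on the law of `(X i)`, so we work on `ℕ → ℝ` with the product
measure `infinitePi μ` and the coordinate walk. There, splitting off the first step and reversing
time in the first `n + 1` steps (both preserve the product measure) give, for `y ≥ 0`,
`∫ P(ladder epoch n, -S n ≤ y + z) μ(dz) = P(ladder epoch n + 1, -S (n+1) ≤ y) + P(τ⁺ = n + 1)`,
where "ladder epoch" means weak descending and `τ⁺` is the first strict ascending ladder epoch.
Summing over `n`, with `P(τ⁺ < ∞) = 1` since the walk does not drift to `-∞`, gives
`V⁻(y) = ∫ V⁻(y + z) μ(dz)`; as `V⁻` vanishes on `(-∞, 0)`, this is the one-step harmonicity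
for the killed walk. The `N`-step identity follows by induction on `N`, splitting off the first
step again.
-/

open Measure

namespace RandomWalk

section Events

variable {Ω : Type*} (X : ℕ → Ω → ℝ)

def ladderSet (n : ℕ) (y : ℝ) : Set Ω :=
  {ω | (∀ j, j < n → rwS X n ω ≤ rwS X j ω) ∧ -rwS X n ω ≤ y}

/-- The condition at `m = 0` makes this empty for `x < 0`, where `Vminus` vanishes too. -/
def survivalSet (N : ℕ) (x : ℝ) : Set Ω :=
  {ω | ∀ m ≤ N, 0 ≤ rwS X m ω + x}

/-- The first strict ascending ladder epoch is `n + 1`. -/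
def firstAscentSet (n : ℕ) : Set Ω :=
  {ω | (∀ i ≤ n, rwS X i ω ≤ 0) ∧ 0 < rwS X (n + 1) ω}

@[simp]
lemma rwS_zero (ω : Ω) : rwS X 0 ω = 0 :=
  Finset.sum_range_zero _

lemma rwS_succ' (n : ℕ) (ω : Ω) : rwS X (n + 1) ω = X 0 ω + rwS (fun i ↦ X (i + 1)) n ω := by
  rw [rwS, Finset.sum_range_succ', add_comm]
  rfl

lemma ladderSet_zero {y : ℝ} (hy : 0 ≤ y) : ladderSet X 0 y = Set.univ := by
  ext ω
  simp [ladderSet, hy]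

lemma ladderSet_of_neg {y : ℝ} (hy : y < 0) (n : ℕ) : ladderSet X n y = ∅ := by
  refine Set.eq_empty_of_forall_notMem fun ω ⟨hmin, hle⟩ ↦ ?_
  have : rwS X n ω ≤ 0 := by
    rcases n.eq_zero_or_pos with rfl | hn
    · simp
    · simpa using hmin 0 hn
  linarith

lemma ladderSet_mono (n : ℕ) : Monotone (ladderSet X n) :=
  fun _ _ hy _ hω ↦ ⟨hω.1, hω.2.trans hy⟩

lemma survivalSet_of_neg {x : ℝ} (hx : x < 0) (N : ℕ) : survivalSet X N x = ∅ :=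
  Set.eq_empty_of_forall_notMem fun ω hω ↦ by linarith [hω 0 N.zero_le, rwS_zero X ω]

lemma survivalSet_zero {x : ℝ} (hx : 0 ≤ x) : survivalSet X 0 x = Set.univ := by
  ext ω
  simp [survivalSet, hx]

lemma survivalSet_eq_of_nonneg {x : ℝ} (hx : 0 ≤ x) (N : ℕ) :
    survivalSet X N x = {ω | ∀ m, 1 ≤ m → m ≤ N → 0 ≤ rwS X m ω + x} := by
  ext ω
  refine ⟨fun h m _ hm ↦ h m hm, fun h m hm ↦ ?_⟩
  rcases m with _ | m
  · simpa using hx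
  · exact h (m + 1) (by omega) hm

lemma pairwise_disjoint_firstAscentSet : Pairwise (Function.onFun Disjoint (firstAscentSet X)) := by
  refine pairwise_disjoint_on _ |>.mpr fun a b hab ↦ Set.disjoint_left.mpr ?_
  exact fun ω ha hb ↦ (ha.2.trans_le (hb.1 (a + 1) hab)).false

lemma iUnion_firstAscentSet : ⋃ n, firstAscentSet X n = {ω | ∃ n, 0 < rwS X n ω} := by
  ext ω
  simp only [Set.mem_iUnion, Set.mem_ofPred_eq]
  refine ⟨fun ⟨n, hn⟩ ↦ ⟨n + 1, hn.2⟩, fun hex ↦ ?_⟩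
  obtain ⟨n, hn⟩ : ∃ n, Nat.find hex = n + 1 :=
    Nat.exists_eq_add_one.mpr <| Nat.pos_of_ne_zero fun h ↦ by simpa [h] using Nat.find_spec hex
  exact ⟨n, fun i hi ↦ not_lt.mp <| Nat.find_min hex (by omega), hn ▸ Nat.find_spec hex⟩

end Events

section Measurability

variable {Ω : Type*} [MeasurableSpace Ω] {X : ℕ → Ω → ℝ}

lemma measurable_rwS (hX : ∀ i, Measurable (X i)) (n : ℕ) : Measurable (rwS X n) :=
  Finset.measurable_sum _ fun i _ ↦ hX i

lemma measurableSet_ladderSet (hX : ∀ i, Measurable (X i)) (n : ℕ) (y : ℝ) :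
    MeasurableSet (ladderSet X n y) := by
  have := measurable_rwS hX
  simp only [ladderSet, Set.ofPred_and, Set.ofPred_forall]
  exact .inter (.iInter fun j ↦ .iInter fun _ ↦ measurableSet_le (this n) (this j))
    (measurableSet_le (this n).neg measurable_const)

lemma measurableSet_survivalSet (hX : ∀ i, Measurable (X i)) (N : ℕ) (x : ℝ) :
    MeasurableSet (survivalSet X N x) := by
  simp only [survivalSet, Set.ofPred_forall]
  exact .iInter fun m ↦ .iInter fun _ ↦
    measurableSet_le measurable_const ((measurable_rwS hX m).add_const x)

lemma measurableSet_firstAscentSet (hX : ∀ i, Measurable (X i)) (n : ℕ) :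
    MeasurableSet (firstAscentSet X n) := by
  have := measurable_rwS hX
  simp only [firstAscentSet, Set.ofPred_and, Set.ofPred_forall]
  exact .inter (.iInter fun i ↦ .iInter fun _ ↦ measurableSet_le (this i) measurable_const)
    (measurableSet_lt measurable_const (this (n + 1)))

end Measurability

section Renewal

variable {Ω : Type*} [MeasurableSpace Ω] (P : Measure Ω) (X : ℕ → Ω → ℝ)

lemma Vminus_eq_tsum (y : ℝ) : Vminus P X y = ∑' n, P (ladderSet X n y) := rfl

lemma Vminus_mono : Monotone (Vminus P X) :=
  fun _ _ hy ↦ ENNReal.tsum_le_tsum fun n ↦ measure_mono (ladderSet_mono X n hy)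

lemma Vminus_of_neg {y : ℝ} (hy : y < 0) : Vminus P X y = 0 := by
  simp [Vminus_eq_tsum, ladderSet_of_neg X hy]

variable {P X}

lemma tsum_measure_firstAscentSet [IsProbabilityMeasure P] (hX : ∀ i, Measurable (X i))
    (hup : ∀ᵐ ω ∂P, ∃ n, 0 < rwS X n ω) : ∑' n, P (firstAscentSet X n) = 1 := by
  rw [← measure_iUnion (pairwise_disjoint_firstAscentSet X) (measurableSet_firstAscentSet hX),
    iUnion_firstAscentSet, measure_congr (eventuallyEq_univ.mpr hup), measure_univ]

end Renewal

def coord (i : ℕ) (s : ℕ → ℝ) : ℝ := s i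

lemma measurable_coord (i : ℕ) : Measurable (coord i) := measurable_pi_apply i

section Transfer

variable {Ω : Type*} [MeasurableSpace Ω] (P : Measure Ω) {X : ℕ → Ω → ℝ}
  (hX : ∀ i, Measurable (X i))
include hX

lemma Vminus_map_eq (y : ℝ) : Vminus (P.map fun ω i ↦ X i ω) coord y = Vminus P X y :=
  tsum_congr fun n ↦ Measure.map_apply (measurable_pi_lambda _ hX)
    (measurableSet_ladderSet measurable_coord n y)

lemma setLIntegral_survivalSet_map_eq {f : ℝ → ℝ≥0∞} (hf : Measurable f) (N : ℕ) (x : ℝ) :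
    ∫⁻ s in survivalSet coord N x, f (rwS coord N s + x) ∂(P.map fun ω i ↦ X i ω)
      = ∫⁻ ω in survivalSet X N x, f (rwS X N ω + x) ∂P :=
  setLIntegral_map (measurableSet_survivalSet measurable_coord N x)
    (hf.comp ((measurable_rwS measurable_coord N).add_const x))
    (measurable_pi_lambda _ hX)

end Transfer

section HeadTail

variable {α : Type*} [MeasurableSpace α] (μ : Measure α) [IsProbabilityMeasure μ]

lemma indepFun_head_tail_infinitePi :
    IndepFun (fun s : ℕ → α ↦ s 0) (fun s i ↦ s (i + 1)) (infinitePi fun _ ↦ μ) := by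
  have hind := (iIndepFun_infinitePi (P := fun _ : ℕ ↦ μ) (X := fun _ (a : α) ↦ a)
    fun _ ↦ measurable_id).iIndep
  have h := indep_iSup_of_disjoint (fun i ↦ (measurable_pi_apply i).comap_le) hind
    (S := {0}) (T := Set.range Nat.succ) (by simp)
  rw [iSup_singleton, iSup_range] at h
  rw [IndepFun_iff_Indep]
  convert h using 1
  simp only [MeasurableSpace.pi, MeasurableSpace.comap_iSup, MeasurableSpace.comap_comp]
  rfl

lemma measurePreserving_head_tail_infinitePi :
    MeasurePreserving (fun s : ℕ → α ↦ (s 0, fun i ↦ s (i + 1)))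
      (infinitePi fun _ ↦ μ) (μ.prod (infinitePi fun _ ↦ μ)) := by
  refine ⟨by fun_prop, ?_⟩
  rw [(indepFun_head_tail_infinitePi μ).map_prod_eq_prod_map_map
    (measurable_pi_apply 0).aemeasurable
    (measurable_pi_lambda _ fun i ↦ measurable_pi_apply (i + 1)).aemeasurable,
    infinitePi_map_eval, map_infinitePi_infinitePi_of_inj Nat.succ_injective]

lemma setLIntegral_head_tail_infinitePi {T : Set (α × (ℕ → α))} (hT : MeasurableSet T)
    {G : α × (ℕ → α) → ℝ≥0∞} (hG : Measurable G) :
    ∫⁻ s in (fun s : ℕ → α ↦ (s 0, fun i ↦ s (i + 1))) ⁻¹' T, G (s 0, fun i ↦ s (i + 1))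
        ∂(infinitePi fun _ ↦ μ)
      = ∫⁻ z, ∫⁻ w in Prod.mk z ⁻¹' T, G (z, w) ∂(infinitePi fun _ ↦ μ) ∂μ := by
  have hmp := measurePreserving_head_tail_infinitePi μ
  rw [← lintegral_indicator (hT.preimage hmp.measurable)]
  refine (lintegral_congr fun s ↦ Set.indicator_comp_right _).trans ?_
  rw [hmp.lintegral_comp (hG.indicator hT), lintegral_prod _ (hG.indicator hT).aemeasurable]
  refine lintegral_congr fun z ↦ ?_
  rw [← lintegral_indicator (measurable_prodMk_left hT)]
  exact lintegral_congr fun w ↦ (Set.indicator_comp_right _).symm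

end HeadTail

section Canonical

variable (μ : Measure ℝ) [IsProbabilityMeasure μ]

lemma rwS_coord_reverse {n k : ℕ} (hk : k ≤ n + 1) (s : ℕ → ℝ) :
    rwS coord k (fun i ↦ s (if i ≤ n then n - i else i))
      = rwS coord (n + 1) s - rwS coord (n + 1 - k) s := by
  have : ∑ i ∈ Finset.range k, s (if i ≤ n then n - i else i)
      = ∑ i ∈ Finset.range k, s (n - i) :=
    Finset.sum_congr rfl fun i hi ↦ by rw [if_pos (by simp at hi; omega)]
  simp only [rwS, coord]
  rw [this, ← Finset.sum_Ico_eq_sub _ (by omega), Finset.range_eq_Ico,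
    Finset.sum_Ico_reflect _ _ hk, Nat.sub_zero]

lemma measure_reverse_firstAscentSet (n : ℕ) :
    (infinitePi fun _ ↦ μ)
        {s | (∀ j < n, rwS coord (n + 1) s ≤ rwS coord (j + 1) s) ∧ 0 < rwS coord (n + 1) s}
      = (infinitePi fun _ ↦ μ) (firstAscentSet coord n) := by
  have hσ : Function.Injective fun i ↦ if i ≤ n then n - i else i := by
    intro a b h
    dsimp only at h
    split_ifs at h <;> omega
  have hrev : MeasurePreserving (fun (s : ℕ → ℝ) i ↦ s (if i ≤ n then n - i else i))
      (infinitePi fun _ ↦ μ) (infinitePi fun _ ↦ μ) :=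
    ⟨by fun_prop, map_infinitePi_infinitePi_of_inj hσ⟩
  rw [← hrev.measure_preimage
    (measurableSet_firstAscentSet measurable_coord n).nullMeasurableSet]
  congr 1
  ext s
  simp only [firstAscentSet, Set.mem_preimage, Set.mem_ofPred_eq,
    rwS_coord_reverse le_rfl, Nat.sub_self, rwS_zero, sub_zero]
  refine and_congr_left fun _ ↦ ⟨fun h i hi ↦ ?_, fun h j hj ↦ ?_⟩
  · rcases Nat.eq_zero_or_pos i with rfl | hi0
    · simp
    · rw [rwS_coord_reverse (by omega)]
      have := h (n - i) (by omega)
      rw [show n - i + 1 = n + 1 - i by omega] at this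
      linarith
  · have := h (n - j) (by omega)
    rw [rwS_coord_reverse (by omega), show n + 1 - (n - j) = j + 1 by omega] at this
    linarith

lemma rwS_coord_succ (k : ℕ) (s : ℕ → ℝ) :
    rwS coord (k + 1) s = s 0 + rwS coord k (fun i ↦ s (i + 1)) :=
  rwS_succ' coord k s

lemma measurableSet_ladderSet_shift (n : ℕ) (y : ℝ) :
    MeasurableSet {p : ℝ × (ℕ → ℝ) | p.2 ∈ ladderSet coord n (p.1 + y)} := by
  have hS k : Measurable fun p : ℝ × (ℕ → ℝ) ↦ rwS coord k p.2 :=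
    (measurable_rwS measurable_coord k).comp measurable_snd
  change MeasurableSet {p : ℝ × (ℕ → ℝ) | (∀ j, j < n → rwS coord n p.2 ≤ rwS coord j p.2)
    ∧ -rwS coord n p.2 ≤ p.1 + y}
  simp only [Set.ofPred_and, Set.ofPred_forall]
  exact .inter (.iInter fun j ↦ .iInter fun _ ↦ measurableSet_le (hS n) (hS j))
    (measurableSet_le (hS n).neg (measurable_fst.add_const y))

lemma lintegral_measure_ladderSet {y : ℝ} (hy : 0 ≤ y) (n : ℕ) :
    ∫⁻ z, (infinitePi fun _ ↦ μ) (ladderSet coord n (z + y)) ∂μ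
      = (infinitePi fun _ ↦ μ) (ladderSet coord (n + 1) y)
        + (infinitePi fun _ ↦ μ) (firstAscentSet coord n) := by
  set E := {s : ℕ → ℝ | (∀ j < n, rwS coord (n + 1) s ≤ rwS coord (j + 1) s)
    ∧ -rwS coord (n + 1) s ≤ y}
  have hE : (infinitePi fun _ ↦ μ) E
      = ∫⁻ z, (infinitePi fun _ ↦ μ) (ladderSet coord n (z + y)) ∂μ := by
    have hT := measurableSet_ladderSet_shift n y
    refine Eq.trans ?_ ((measurePreserving_head_tail_infinitePi μ).measure_preimage
      hT.nullMeasurableSet |>.trans (Measure.prod_apply hT))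
    congr 1
    ext s
    simp only [ladderSet, E, Set.mem_preimage, Set.mem_ofPred_eq, rwS_coord_succ]
    refine and_congr (forall₂_congr fun _ _ ↦ by rw [add_le_add_iff_left]) ?_
    constructor <;> intro h <;> linarith
  have hlow : E ∩ {s | rwS coord (n + 1) s ≤ 0} = ladderSet coord (n + 1) y := by
    ext s
    simp only [ladderSet, E, Set.mem_inter_iff, Set.mem_ofPred_eq]
    constructor
    · rintro ⟨⟨hmin, hle⟩, hneg⟩
      refine ⟨fun j hj ↦ ?_, hle⟩
      rcases j with _ | j
      · simpa using hneg
      · exact hmin j (by omega)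
    · rintro ⟨hmin, hle⟩
      exact ⟨⟨fun j hj ↦ hmin (j + 1) (by omega), hle⟩, by simpa using hmin 0 (by omega)⟩
  have hhigh : E \ {s | rwS coord (n + 1) s ≤ 0}
      = {s | (∀ j < n, rwS coord (n + 1) s ≤ rwS coord (j + 1) s) ∧ 0 < rwS coord (n + 1) s} := by
    ext s
    simp only [E, Set.mem_sdiff, Set.mem_ofPred_eq, not_le]
    exact ⟨fun ⟨⟨hmin, _⟩, hpos⟩ ↦ ⟨hmin, hpos⟩, fun ⟨hmin, hpos⟩ ↦ ⟨⟨hmin, by linarith⟩, hpos⟩⟩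
  rw [← hE, ← measure_inter_add_sdiff E
    (measurableSet_le (measurable_rwS measurable_coord (n + 1)) measurable_const),
    hlow, hhigh, measure_reverse_firstAscentSet]

lemma Vminus_infinitePi_eq_lintegral (hup : ∀ᵐ s ∂(infinitePi fun _ ↦ μ), ∃ n, 0 < rwS coord n s)
    {y : ℝ} (hy : 0 ≤ y) :
    Vminus (infinitePi fun _ ↦ μ) coord y
      = ∫⁻ z, Vminus (infinitePi fun _ ↦ μ) coord (z + y) ∂μ := by
  have hmeas n : Measurable fun z ↦ (infinitePi fun _ ↦ μ) (ladderSet coord n (z + y)) :=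
    (Monotone.measurable fun _ _ h ↦ measure_mono (ladderSet_mono coord n h)).comp
      (measurable_add_const y)
  simp only [Vminus_eq_tsum]
  rw [lintegral_tsum fun n ↦ (hmeas n).aemeasurable, tsum_eq_zero_add' ENNReal.summable,
    ladderSet_zero coord hy, measure_univ, tsum_congr (lintegral_measure_ladderSet μ hy),
    ENNReal.tsum_add, tsum_measure_firstAscentSet measurable_coord hup, add_comm]

lemma measurableSet_survivalSet_shift (N : ℕ) (x : ℝ) :
    MeasurableSet {p : ℝ × (ℕ → ℝ) | p.2 ∈ survivalSet coord N (p.1 + x)} := by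
  change MeasurableSet {p : ℝ × (ℕ → ℝ) | ∀ m ≤ N, 0 ≤ rwS coord m p.2 + (p.1 + x)}
  simp only [Set.ofPred_forall]
  exact .iInter fun m ↦ .iInter fun _ ↦ measurableSet_le measurable_const
    (((measurable_rwS measurable_coord m).comp measurable_snd).add (measurable_fst.add_const x))

lemma setLIntegral_survivalSet_succ {x : ℝ} (hx : 0 ≤ x) {f : ℝ → ℝ≥0∞} (hf : Measurable f)
    (N : ℕ) :
    ∫⁻ s in survivalSet coord (N + 1) x, f (rwS coord (N + 1) s + x) ∂(infinitePi fun _ ↦ μ)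
      = ∫⁻ z, ∫⁻ s in survivalSet coord N (z + x), f (rwS coord N s + (z + x))
          ∂(infinitePi fun _ ↦ μ) ∂μ := by
  have hset : survivalSet coord (N + 1) x = (fun s : ℕ → ℝ ↦ (s 0, fun i ↦ s (i + 1))) ⁻¹'
      {p | p.2 ∈ survivalSet coord N (p.1 + x)} := by
    ext s
    simp only [survivalSet, Set.mem_preimage, Set.mem_ofPred_eq]
    constructor
    · intro h m hm
      have := h (m + 1) (by omega)
      rw [rwS_coord_succ] at this
      linarith
    · intro h m hm
      rcases m with _ | m
      · simpa using hx
      · have := h m (by omega)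
        rw [rwS_coord_succ]
        linarith
  have hT := measurableSet_survivalSet_shift N x
  rw [hset]
  refine (setLIntegral_congr_fun (hT.preimage
    (measurePreserving_head_tail_infinitePi μ).measurable) fun s _ ↦ ?_).trans
    (setLIntegral_head_tail_infinitePi μ hT (G := fun p ↦ f (rwS coord N p.2 + (p.1 + x)))
      (hf.comp (((measurable_rwS measurable_coord N).comp measurable_snd).add
        (measurable_fst.add_const x))))
  simp only [rwS_coord_succ]
  ring_nf

theorem Vminus_infinitePi_eq_setLIntegral_survivalSet
    (hup : ∀ᵐ s ∂(infinitePi fun _ ↦ μ), ∃ n, 0 < rwS coord n s) (N : ℕ) (x : ℝ) :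
    Vminus (infinitePi fun _ ↦ μ) coord x
      = ∫⁻ s in survivalSet coord N x, Vminus (infinitePi fun _ ↦ μ) coord (rwS coord N s + x)
          ∂(infinitePi fun _ ↦ μ) := by
  induction N generalizing x with
  | zero =>
    rcases lt_or_ge x 0 with hx | hx
    · simp [survivalSet_of_neg coord hx, Vminus_of_neg _ _ hx]
    · simp [survivalSet_zero coord hx]
  | succ N ih =>
    rcases lt_or_ge x 0 with hx | hx
    · simp [survivalSet_of_neg coord hx, Vminus_of_neg _ _ hx]
    · rw [setLIntegral_survivalSet_succ μ hx (Vminus_mono _ _).measurable,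
        Vminus_infinitePi_eq_lintegral μ hup hx]
      exact lintegral_congr fun z ↦ ih (z + x)

end Canonical

end RandomWalk

open RandomWalk

/-- if the walk does not drift to `-∞` (`limsup Sₙ = +∞` a.s.), then `V⁻` is
invariant for the walk killed on entering `(-∞,0)`:
`V⁻(x) = E_x[V⁻(S_N) 1{S₁ ≥ 0, …, S_N ≥ 0}]`. -/
theorem stmt7 {Ω : Type*} [MeasurableSpace Ω] (P : Measure Ω) [IsProbabilityMeasure P]
    (X : ℕ → Ω → ℝ) (hmeas : ∀ i, Measurable (X i))
    (hindep : iIndepFun X P)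
    (hident : ∀ i, IdentDistrib (X i) (X 0) P P)
    (hlimsup : ∀ᵐ ω ∂P, ∀ M : ℝ, ∃ᶠ n in atTop, M < rwS X n ω) :
    ∀ x : ℝ, 0 ≤ x → ∀ N : ℕ, 1 ≤ N →
      Vminus P X x
        = ∫⁻ ω in {ω | ∀ m, 1 ≤ m → m ≤ N → 0 ≤ rwS X m ω + x},
            Vminus P X (rwS X N ω + x) ∂P := by
  intro x hx N _
  have := isProbabilityMeasure_map (μ := P) (hmeas 0).aemeasurable
  have hlaw : P.map (fun ω i ↦ X i ω) = infinitePi fun _ ↦ P.map (X 0) := by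
    rw [hindep.map_fun_eq_infinitePi_map hmeas]
    simp_rw [(hident _).map_eq]
  have hup : ∀ᵐ s ∂(P.map fun ω i ↦ X i ω), ∃ n, 0 < rwS coord n s := by
    refine (ae_map_iff (measurable_pi_lambda _ hmeas).aemeasurable ?_).mpr
      (hlimsup.mono fun ω h ↦ (h 0).exists)
    simp only [Set.ofPred_exists]
    exact .iUnion fun n ↦ measurableSet_lt measurable_const (measurable_rwS measurable_coord n)
  simp_rw [← survivalSet_eq_of_nonneg X hx, ← Vminus_map_eq P hmeas]
  rw [← setLIntegral_survivalSet_map_eq P hmeas (Vminus_mono _ _).measurable, hlaw]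
  exact Vminus_infinitePi_eq_setLIntegral_survivalSet _ (hlaw ▸ hup) N x
end

section
/- In the setting of the previous statement (random walk not drifting to −∞), the modified renewal function V̲^-(x) := E[#{k ≥ 0 : H_k^- < x}] for x > 0, with V̲^-(0) := 1, is harmonic for the walk killed upon entering (−∞, 0]: for every x ≥ 0 and N ∈ ℕ, V̲^-(x) = E_x[ V̲^-(S_N) 1{S_1 > 0, ..., S_N > 0} ]. -/
/-!
Write `V` for `V̲⁻`. For an iid walk the first increment `X₀` is independent of the shifted walk,
which is a copy of the walk; this Markov property reduces the `N`-step identity to the one-step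
identity `V(x) = E[V(x + X₀); x + X₀ > 0]` for `x ≥ 0`, iterated `N` times.

For the one-step identity, expand `V(x + X₀)` as the expected number of weak descending ladder
epochs `n` of the shifted walk with height below `x + X₀`. Pathwise, such an `n` is either a ladder
epoch `n + 1` of the walk itself with height below `x` (when `S_{n+1} ≤ 0`), or `S_{n+1} > 0`
and, after running the first `n + 1` increments backwards, `n + 1` is the first time the walk is
positive. Time reversal preserves the law of the increments, and since `limsup S_n = +∞` the walk
becomes positive at a unique first time almost surely; this accounts for the term `1` that epoch
`0` contributes to `V(x)` for `x > 0`, and that `V(0)` equals by convention.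
-/

open MeasureTheory ProbabilityTheory Filter
open scoped ENNReal

/-- The modified weak descending renewal function `V̲⁻(x) = Σ_k P(H_k⁻ < x)` for `x > 0`,
with `V̲⁻(0) := 1`. -/
noncomputable def VminusBar {Ω : Type*} [MeasurableSpace Ω] (P : Measure Ω)
    (X : ℕ → Ω → ℝ) (x : ℝ) : ℝ≥0∞ :=
  if x = 0 then 1
  else ∑' n : ℕ, P {ω | (∀ j, j < n → rwS X n ω ≤ rwS X j ω) ∧ -rwS X n ω < x}

open Finset

namespace ProbabilityTheory

variable {Ω β : Type*} [MeasurableSpace Ω] [MeasurableSpace β] {P : Measure Ω} {X : ℕ → Ω → β}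

lemma iIndepFun.indepFun_head_tail (hindep : iIndepFun X P) (hmeas : ∀ i, Measurable (X i)) :
    IndepFun (X 0) (fun ω i => X (i + 1) ω) P := by
  rw [IndepFun_iff_Indep]
  refine indep_of_indep_of_le (indep_iSup_of_disjoint (fun i => (hmeas i).comap_le) hindep
    (disjoint_compl_right (a := ({0} : Set ℕ)))) (le_iSup₂_of_le 0 rfl le_rfl) ?_
  simp only [MeasurableSpace.pi, MeasurableSpace.comap_iSup, MeasurableSpace.comap_comp]
  exact iSup_le fun i => le_iSup₂_of_le (i + 1) (Nat.succ_ne_zero i) le_rfl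

lemma iIndepFun.identDistrib_comp_of_injective (hindep : iIndepFun X P)
    (hident : ∀ i, IdentDistrib (X i) (X 0) P P) {g : ℕ → ℕ} (hg : g.Injective) :
    IdentDistrib (fun ω i => X (g i) ω) (fun ω i => X i ω) P P :=
  .pi (fun i => (hident (g i)).trans (hident i).symm) (hindep.precomp hg) hindep

variable [IsProbabilityMeasure P]

lemma iIndepFun.map_head_tail (hindep : iIndepFun X P) (hmeas : ∀ i, Measurable (X i))
    (hident : ∀ i, IdentDistrib (X i) (X 0) P P) :
    P.map (fun ω => (X 0 ω, fun i => X (i + 1) ω))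
      = (P.map (X 0)).prod (P.map fun ω i => X i ω) := by
  rw [(hindep.indepFun_head_tail hmeas).map_prod_eq_prod_map_map (hmeas 0).aemeasurable
    (by fun_prop), (hindep.identDistrib_comp_of_injective hident Nat.succ_injective).map_eq]

lemma iIndepFun.lintegral_head_tail (hindep : iIndepFun X P) (hmeas : ∀ i, Measurable (X i))
    (hident : ∀ i, IdentDistrib (X i) (X 0) P P) {F : β × (ℕ → β) → ℝ≥0∞}
    (hF : Measurable F) :
    ∫⁻ ω, F (X 0 ω, fun i => X (i + 1) ω) ∂P
      = ∫⁻ ω', ∫⁻ ω, F (X 0 ω', fun i => X i ω) ∂P ∂P := by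
  rw [← lintegral_map hF (by fun_prop), hindep.map_head_tail hmeas hident,
    lintegral_prod _ hF.aemeasurable, lintegral_map hF.lintegral_prod_right' (hmeas 0)]
  exact lintegral_congr fun ω' => lintegral_map (by fun_prop) (by fun_prop)

lemma iIndepFun.measure_head_tail (hindep : iIndepFun X P) (hmeas : ∀ i, Measurable (X i))
    (hident : ∀ i, IdentDistrib (X i) (X 0) P P) {E : Set (β × (ℕ → β))} (hE : MeasurableSet E) :
    P {ω | (X 0 ω, fun i => X (i + 1) ω) ∈ E}
      = ∫⁻ ω', (P.map fun ω i => X i ω) (Prod.mk (X 0 ω') ⁻¹' E) ∂P := by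
  change P ((fun ω => (X 0 ω, fun i => X (i + 1) ω)) ⁻¹' E) = _
  rw [← Measure.map_apply (by fun_prop) hE, hindep.map_head_tail hmeas hident,
    Measure.prod_apply hE, lintegral_map (measurable_measure_prodMk_left hE) (hmeas 0)]

end ProbabilityTheory

namespace RandomWalk

def partialSum (s : ℕ → ℝ) (n : ℕ) : ℝ := ∑ i ∈ range n, s i

@[simp] lemma partialSum_zero (s : ℕ → ℝ) : partialSum s 0 = 0 := rfl

lemma partialSum_one (s : ℕ → ℝ) : partialSum s 1 = s 0 := sum_range_one s

lemma partialSum_shift (s : ℕ → ℝ) (n : ℕ) :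
    partialSum (fun i => s (i + 1)) n = partialSum s (n + 1) - s 0 := by
  rw [partialSum, partialSum, sum_range_succ']; ring

@[fun_prop]
lemma measurable_partialSum (n : ℕ) : Measurable fun s : ℕ → ℝ => partialSum s n := by
  unfold partialSum; fun_prop

def reflect (n i : ℕ) : ℕ := if i ≤ n then n - i else i

lemma reflect_injective (n : ℕ) : Function.Injective (reflect n) := by
  intro i j h; simp only [reflect] at h; split_ifs at h <;> omega

lemma partialSum_comp_reflect (s : ℕ → ℝ) {n k : ℕ} (hk : k ≤ n + 1) :
    partialSum (s ∘ reflect n) k = partialSum s (n + 1) - partialSum s (n + 1 - k) := by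
  have hsum : partialSum (s ∘ reflect n) k = ∑ i ∈ Ico 0 k, s (n - i) :=
    sum_congr (by simp) fun i hi => by
      simp only [Function.comp, reflect, if_pos (show i ≤ n by simp at hi; omega)]
  rw [hsum, sum_Ico_reflect _ _ hk, sum_Ico_eq_sub _ (by omega), Nat.sub_zero]
  rfl

def IsWeakDescLadder (s : ℕ → ℝ) (n : ℕ) (y : ℝ) : Prop :=
  (∀ j < n, partialSum s n ≤ partialSum s j) ∧ -partialSum s n < y

/-- `n + 1`, not `n`, is the first time the walk is positive. -/
def IsFirstPassage (s : ℕ → ℝ) (n : ℕ) : Prop :=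
  (∀ k, 1 ≤ k → k ≤ n → partialSum s k ≤ 0) ∧ 0 < partialSum s (n + 1)

lemma IsWeakDescLadder.mono {s : ℕ → ℝ} {n : ℕ} {y y' : ℝ} (h : IsWeakDescLadder s n y)
    (hy : y ≤ y') : IsWeakDescLadder s n y' :=
  ⟨h.1, h.2.trans_le hy⟩

lemma isWeakDescLadder_zero_iff (s : ℕ → ℝ) (y : ℝ) : IsWeakDescLadder s 0 y ↔ 0 < y := by
  simp [IsWeakDescLadder]

lemma not_isWeakDescLadder_zero (s : ℕ → ℝ) (n : ℕ) : ¬ IsWeakDescLadder s n 0 := by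
  rintro ⟨hmin, hlt⟩
  rcases Nat.eq_zero_or_pos n with rfl | hn
  · simp at hlt
  · have := hmin 0 hn; simp at this; linarith

lemma isWeakDescLadder_succ_iff (s : ℕ → ℝ) (n : ℕ) (y : ℝ) :
    IsWeakDescLadder s (n + 1) y ↔ (∀ j < n, partialSum s (n + 1) ≤ partialSum s (j + 1)) ∧
      -y < partialSum s (n + 1) ∧ partialSum s (n + 1) ≤ 0 := by
  simp only [IsWeakDescLadder, Nat.forall_lt_succ_left, partialSum_zero]
  constructor
  · rintro ⟨⟨h0, h⟩, hy⟩; exact ⟨h, by linarith, h0⟩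
  · rintro ⟨h, hy, h0⟩; exact ⟨⟨h0, h⟩, by linarith⟩

lemma isWeakDescLadder_shift_iff (s : ℕ → ℝ) (n : ℕ) (x : ℝ) :
    IsWeakDescLadder (fun i => s (i + 1)) n (s 0 + x) ↔
      (∀ j < n, partialSum s (n + 1) ≤ partialSum s (j + 1)) ∧ -x < partialSum s (n + 1) := by
  simp only [IsWeakDescLadder, partialSum_shift, sub_le_sub_iff_right]
  exact and_congr_right fun _ => by constructor <;> intro h <;> linarith

lemma isFirstPassage_comp_reflect_iff (s : ℕ → ℝ) (n : ℕ) :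
    IsFirstPassage (s ∘ reflect n) n ↔
      (∀ j < n, partialSum s (n + 1) ≤ partialSum s (j + 1)) ∧ 0 < partialSum s (n + 1) := by
  simp only [IsFirstPassage, partialSum_comp_reflect s le_rfl, Nat.sub_self, partialSum_zero,
    sub_zero]
  refine and_congr_left fun _ => ⟨fun h j hj => ?_, fun h k hk1 hkn => ?_⟩
  · have := h (n - j) (by omega) (by omega)
    rw [partialSum_comp_reflect s (by omega), show n + 1 - (n - j) = j + 1 by omega] at this
    linarith
  · rw [partialSum_comp_reflect s (by omega)]
    have := h (n - k) (by omega)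
    rw [show n - k + 1 = n + 1 - k by omega] at this
    linarith

lemma IsFirstPassage.unique {s : ℕ → ℝ} {m n : ℕ} (hm : IsFirstPassage s m)
    (hn : IsFirstPassage s n) : m = n := by
  by_contra hne
  rcases Nat.lt_or_gt_of_ne hne with h | h
  · exact (hn.1 (m + 1) (by omega) (by omega)).not_gt hm.2
  · exact (hm.1 (n + 1) (by omega) (by omega)).not_gt hn.2

lemma exists_isFirstPassage {s : ℕ → ℝ} (h : ∃ k, 0 < partialSum s k) :
    ∃ n, IsFirstPassage s n := by
  classical
  have hk := Nat.find_spec h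
  obtain ⟨n, hn⟩ : ∃ n, Nat.find h = n + 1 := Nat.exists_eq_succ_of_ne_zero fun h0 => by
    simp [h0] at hk
  exact ⟨n, fun k hk1 hkn => not_lt.1 (Nat.find_min h (by omega)), hn ▸ hk⟩

lemma pos_and_isWeakDescLadder_shift_iff {s : ℕ → ℝ} {n : ℕ} {x : ℝ} (hx : 0 ≤ x) :
    (0 < s 0 + x ∧ IsWeakDescLadder (fun i => s (i + 1)) n (s 0 + x)) ↔
      IsWeakDescLadder s (n + 1) x ∨ IsFirstPassage (s ∘ reflect n) n := by
  rw [isWeakDescLadder_shift_iff, isWeakDescLadder_succ_iff, isFirstPassage_comp_reflect_iff]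
  have hhead (hmin : ∀ j < n, partialSum s (n + 1) ≤ partialSum s (j + 1)) :
      partialSum s (n + 1) ≤ s 0 := by
    rcases Nat.eq_zero_or_pos n with rfl | hn
    · exact (partialSum_one s).le
    · simpa [partialSum_one] using hmin 0 hn
  constructor
  · rintro ⟨-, hmin, hgt⟩
    exact (le_or_gt (partialSum s (n + 1)) 0).imp (fun hle => ⟨hmin, hgt, hle⟩)
      fun hpos => ⟨hmin, hpos⟩
  · rintro (⟨hmin, hgt, -⟩ | ⟨hmin, hpos⟩)
    · exact ⟨by linarith [hhead hmin], hmin, hgt⟩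
    · exact ⟨by linarith [hhead hmin], hmin, by linarith⟩

lemma IsWeakDescLadder.not_isFirstPassage_comp_reflect {s : ℕ → ℝ} {n : ℕ} {x : ℝ}
    (h : IsWeakDescLadder s (n + 1) x) : ¬ IsFirstPassage (s ∘ reflect n) n := by
  rw [isWeakDescLadder_succ_iff] at h
  rw [isFirstPassage_comp_reflect_iff]
  exact fun h' => h.2.2.not_gt h'.2

lemma measurableSet_isWeakDescLadder {α : Type*} [MeasurableSpace α] {f : α → ℕ → ℝ}
    {g : α → ℝ} (hf : Measurable f) (hg : Measurable g) (n : ℕ) :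
    MeasurableSet {a | IsWeakDescLadder (f a) n (g a)} := by
  unfold IsWeakDescLadder; measurability

lemma measurableSet_isFirstPassage {α : Type*} [MeasurableSpace α] {f : α → ℕ → ℝ}
    (hf : Measurable f) (n : ℕ) : MeasurableSet {a | IsFirstPassage (f a) n} := by
  unfold IsFirstPassage; measurability

noncomputable def killedPayoff (f : ℝ → ℝ≥0∞) (N : ℕ) (x : ℝ) (s : ℕ → ℝ) : ℝ≥0∞ :=
  {s : ℕ → ℝ | ∀ m, 1 ≤ m → m ≤ N → 0 < partialSum s m + x}.indicator
    (fun s => f (partialSum s N + x)) s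

lemma killedPayoff_zero (f : ℝ → ℝ≥0∞) (x : ℝ) (s : ℕ → ℝ) : killedPayoff f 0 x s = f x := by
  simp [killedPayoff]

lemma killedPayoff_succ (f : ℝ → ℝ≥0∞) (N : ℕ) (x : ℝ) (s : ℕ → ℝ) :
    killedPayoff f (N + 1) x s
      = if 0 < s 0 + x then killedPayoff f N (s 0 + x) (fun i => s (i + 1)) else 0 := by
  have hsum (m : ℕ) :
      partialSum s (m + 1) + x = partialSum (fun i => s (i + 1)) m + (s 0 + x) := by
    rw [partialSum_shift]; ring
  have hcond : (∀ m, 1 ≤ m → m ≤ N + 1 → 0 < partialSum s m + x) ↔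
      0 < s 0 + x ∧ ∀ m, 1 ≤ m → m ≤ N → 0 < partialSum (fun i => s (i + 1)) m + (s 0 + x) := by
    refine ⟨fun h => ⟨by simpa [partialSum_one] using h 1 le_rfl (by omega), fun m h1 h2 => ?_⟩,
      fun ⟨h0, h⟩ m h1 h2 => ?_⟩
    · rw [← hsum]; exact h (m + 1) (by omega) (by omega)
    · obtain ⟨k, rfl⟩ : ∃ k, m = k + 1 := ⟨m - 1, by omega⟩
      rcases Nat.eq_zero_or_pos k with rfl | hk
      · simpa [partialSum_one] using h0
      · rw [hsum]; exact h k hk (by omega)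
  simp only [killedPayoff, Set.indicator_apply, Set.mem_ofPred_eq, hcond, hsum]
  split_ifs <;> simp_all

lemma measurable_killedPayoff {f : ℝ → ℝ≥0∞} (hf : Measurable f) (N : ℕ) :
    Measurable fun p : ℝ × (ℕ → ℝ) => killedPayoff f N p.1 p.2 :=
  Measurable.indicator (s := {p : ℝ × (ℕ → ℝ) | ∀ m, 1 ≤ m → m ≤ N → 0 < partialSum p.2 m + p.1})
    (f := fun p => f (partialSum p.2 N + p.1)) (by fun_prop) (by measurability)

section Walk

variable {Ω : Type*} [MeasurableSpace Ω] {P : Measure Ω} {X : ℕ → Ω → ℝ}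

variable (P X) in
/-- `E_x[f(S_N); S_1 > 0, …, S_N > 0]`: the walk started at `x`, killed on entering `(-∞, 0]`. -/
noncomputable def killedExpect (f : ℝ → ℝ≥0∞) (N : ℕ) (x : ℝ) : ℝ≥0∞ :=
  ∫⁻ ω, killedPayoff f N x (fun i => X i ω) ∂P

lemma killedExpect_one (f : ℝ → ℝ≥0∞) (x : ℝ) :
    killedExpect P X f 1 x = ∫⁻ ω, (if 0 < X 0 ω + x then f (X 0 ω + x) else 0) ∂P := by
  simp only [killedExpect, killedPayoff_succ, killedPayoff_zero]

lemma killedExpect_congr {f g : ℝ → ℝ≥0∞} (hfg : ∀ y, 0 < y → f y = g y) (N : ℕ) (x : ℝ) :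
    killedExpect P X f (N + 1) x = killedExpect P X g (N + 1) x := by
  refine lintegral_congr fun ω => ?_
  simp only [killedPayoff, Set.indicator_apply, Set.mem_ofPred_eq]
  split_ifs with h
  exacts [hfg _ (h (N + 1) (by omega) le_rfl), rfl]

variable [IsProbabilityMeasure P]

lemma killedExpect_zero (f : ℝ → ℝ≥0∞) (x : ℝ) : killedExpect P X f 0 x = f x := by
  simp [killedExpect, killedPayoff_zero]

lemma killedExpect_succ (hmeas : ∀ i, Measurable (X i)) (hindep : iIndepFun X P)
    (hident : ∀ i, IdentDistrib (X i) (X 0) P P) {f : ℝ → ℝ≥0∞} (hf : Measurable f) (N : ℕ)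
    (x : ℝ) : killedExpect P X f (N + 1) x = killedExpect P X (killedExpect P X f N) 1 x := by
  have hF : Measurable fun p : ℝ × (ℕ → ℝ) =>
      if 0 < p.1 + x then killedPayoff f N (p.1 + x) p.2 else 0 :=
    .ite (measurableSet_lt measurable_const (by fun_prop))
      ((measurable_killedPayoff hf N).comp ((measurable_fst.add_const x).prodMk measurable_snd))
      measurable_const
  rw [killedExpect_one, killedExpect]
  simp_rw [killedPayoff_succ]
  rw [hindep.lintegral_head_tail hmeas hident hF]
  refine lintegral_congr fun ω' => ?_
  split_ifs <;> simp [killedExpect]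

end Walk

section Renewal

variable {Ω : Type*} [MeasurableSpace Ω] {P : Measure Ω} {X : ℕ → Ω → ℝ}

lemma VminusBar_of_ne_zero {y : ℝ} (hy : y ≠ 0) :
    VminusBar P X y = ∑' n, P {ω | IsWeakDescLadder (fun i => X i ω) n y} := by
  rw [VminusBar, if_neg hy]; rfl

lemma measurable_VminusBar : Measurable (VminusBar P X) := by
  refine Measurable.ite (measurableSet_eq_fun measurable_id measurable_const) measurable_const
    (Measurable.tsum fun n => Monotone.measurable fun y y' hy => measure_mono ?_)
  exact fun ω h => IsWeakDescLadder.mono h hy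

lemma measure_isFirstPassage_comp_reflect (hindep : iIndepFun X P)
    (hident : ∀ i, IdentDistrib (X i) (X 0) P P) (n : ℕ) :
    P {ω | IsFirstPassage ((fun i => X i ω) ∘ reflect n) n}
      = P {ω | IsFirstPassage (fun i => X i ω) n} :=
  (hindep.identDistrib_comp_of_injective hident (reflect_injective n)).measure_mem_eq
    (measurableSet_isFirstPassage measurable_id n)

variable [IsProbabilityMeasure P]

lemma VminusBar_eq_one_add {x : ℝ} (hx : 0 ≤ x) :
    VminusBar P X x = 1 + ∑' n, P {ω | IsWeakDescLadder (fun i => X i ω) (n + 1) x} := by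
  rcases hx.eq_or_lt with rfl | hx
  · simp [VminusBar, not_isWeakDescLadder_zero]
  · rw [VminusBar_of_ne_zero hx.ne', tsum_eq_zero_add' ENNReal.summable]
    simp [isWeakDescLadder_zero_iff, hx]

lemma tsum_measure_isFirstPassage (hmeas : ∀ i, Measurable (X i))
    (hlimsup : ∀ᵐ ω ∂P, ∀ M : ℝ, ∃ᶠ n in atTop, M < rwS X n ω) :
    ∑' n, P {ω | IsFirstPassage (fun i => X i ω) n} = 1 := by
  have hmeas' n := measurableSet_isFirstPassage (f := fun ω i => X i ω) (by fun_prop) n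
  have hdisj :
      Pairwise (Function.onFun Disjoint fun n => {ω | IsFirstPassage (fun i => X i ω) n}) :=
    fun m n hmn => Set.disjoint_left.2 fun ω hm hn => hmn (hm.unique hn)
  have hae : ∀ᵐ ω ∂P, ω ∈ ⋃ n, {ω | IsFirstPassage (fun i => X i ω) n} :=
    hlimsup.mono fun ω h => Set.mem_iUnion.2 (exists_isFirstPassage (h 0).exists)
  rw [ae_mem_iff_measure_eq (MeasurableSet.iUnion hmeas').nullMeasurableSet,
    measure_iUnion hdisj hmeas'] at hae
  simpa using hae

lemma tsum_measure_pos_and_isWeakDescLadder_shift (hmeas : ∀ i, Measurable (X i))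
    (hindep : iIndepFun X P) (hident : ∀ i, IdentDistrib (X i) (X 0) P P)
    (hlimsup : ∀ᵐ ω ∂P, ∀ M : ℝ, ∃ᶠ n in atTop, M < rwS X n ω) {x : ℝ} (hx : 0 ≤ x) :
    ∑' n, P {ω | 0 < X 0 ω + x ∧ IsWeakDescLadder (fun i => X (i + 1) ω) n (X 0 ω + x)}
      = VminusBar P X x := by
  have hsplit (n : ℕ) :
      P {ω | 0 < X 0 ω + x ∧ IsWeakDescLadder (fun i => X (i + 1) ω) n (X 0 ω + x)}
        = P {ω | IsWeakDescLadder (fun i => X i ω) (n + 1) x}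
          + P {ω | IsFirstPassage ((fun i => X i ω) ∘ reflect n) n} := by
    rw [← measure_union (Set.disjoint_left.2 fun ω h => h.not_isFirstPassage_comp_reflect)
      (measurableSet_isFirstPassage (by fun_prop) n)]
    exact congrArg P <| Set.ext fun ω =>
      pos_and_isWeakDescLadder_shift_iff (s := fun i => X i ω) hx
  simp_rw [hsplit, ENNReal.tsum_add, measure_isFirstPassage_comp_reflect hindep hident,
    tsum_measure_isFirstPassage hmeas hlimsup, VminusBar_eq_one_add hx, add_comm]

lemma killedExpect_VminusBar_one (hmeas : ∀ i, Measurable (X i)) (hindep : iIndepFun X P)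
    (hident : ∀ i, IdentDistrib (X i) (X 0) P P)
    (hlimsup : ∀ᵐ ω ∂P, ∀ M : ℝ, ∃ᶠ n in atTop, M < rwS X n ω) {x : ℝ} (hx : 0 ≤ x) :
    killedExpect P X (VminusBar P X) 1 x = VminusBar P X x := by
  set E : ℕ → Set (ℝ × (ℕ → ℝ)) :=
    fun n => {p | 0 < p.1 + x ∧ IsWeakDescLadder p.2 n (p.1 + x)}
  have hE n : MeasurableSet (E n) :=
    (measurableSet_lt measurable_const (measurable_fst.add_const x)).inter
      (measurableSet_isWeakDescLadder measurable_snd (measurable_fst.add_const x) n)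
  have hsection (t : ℝ) : ∑' n, (P.map fun ω i => X i ω) (Prod.mk t ⁻¹' E n)
      = if 0 < t + x then VminusBar P X (t + x) else 0 := by
    split_ifs with ht
    · rw [VminusBar_of_ne_zero ht.ne']
      refine tsum_congr fun n => ?_
      rw [Measure.map_apply (by fun_prop) (measurable_prodMk_left (hE n))]
      simp [E, ht]
    · simp [E, ht]
  rw [← tsum_measure_pos_and_isWeakDescLadder_shift hmeas hindep hident hlimsup hx,
    killedExpect_one]
  simp_rw [← hsection]
  refine (lintegral_tsum fun n => ?_).trans
    (tsum_congr fun n => (hindep.measure_head_tail hmeas hident (hE n)).symm)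
  exact ((measurable_measure_prodMk_left (hE n)).comp (hmeas 0)).aemeasurable

lemma killedExpect_VminusBar (hmeas : ∀ i, Measurable (X i)) (hindep : iIndepFun X P)
    (hident : ∀ i, IdentDistrib (X i) (X 0) P P)
    (hlimsup : ∀ᵐ ω ∂P, ∀ M : ℝ, ∃ᶠ n in atTop, M < rwS X n ω) (N : ℕ) {x : ℝ} (hx : 0 ≤ x) :
    killedExpect P X (VminusBar P X) N x = VminusBar P X x := by
  induction N generalizing x with
  | zero => exact killedExpect_zero _ _
  | succ N ih =>
    calc killedExpect P X (VminusBar P X) (N + 1) x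
        = killedExpect P X (killedExpect P X (VminusBar P X) N) 1 x :=
          killedExpect_succ hmeas hindep hident measurable_VminusBar N x
      _ = killedExpect P X (VminusBar P X) 1 x := killedExpect_congr (fun y hy => ih hy.le) 0 x
      _ = VminusBar P X x := killedExpect_VminusBar_one hmeas hindep hident hlimsup hx

end Renewal

end RandomWalk

/-- if the walk does not drift to `-∞`, then `V̲⁻` is invariant for the walk
killed on entering `(-∞,0]`: `V̲⁻(x) = E_x[V̲⁻(S_N) 1{S₁ > 0, …, S_N > 0}]`. -/
theorem stmt8 {Ω : Type*} [MeasurableSpace Ω] (P : Measure Ω) [IsProbabilityMeasure P]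
    (X : ℕ → Ω → ℝ) (hmeas : ∀ i, Measurable (X i))
    (hindep : iIndepFun X P)
    (hident : ∀ i, IdentDistrib (X i) (X 0) P P)
    (hlimsup : ∀ᵐ ω ∂P, ∀ M : ℝ, ∃ᶠ n in atTop, M < rwS X n ω) :
    ∀ x : ℝ, 0 ≤ x → ∀ N : ℕ, 1 ≤ N →
      VminusBar P X x
        = ∫⁻ ω in {ω | ∀ m, 1 ≤ m → m ≤ N → 0 < rwS X m ω + x},
            VminusBar P X (rwS X N ω + x) ∂P := by
  intro x hx N _
  have hA : MeasurableSet {ω | ∀ m, 1 ≤ m → m ≤ N → 0 < rwS X m ω + x} :=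
    (by measurability : MeasurableSet
      {s | ∀ m, 1 ≤ m → m ≤ N → 0 < RandomWalk.partialSum s m + x}).preimage
      (f := fun ω i => X i ω) (by fun_prop)
  rw [← lintegral_indicator hA]
  exact (RandomWalk.killedExpect_VminusBar hmeas hindep hident hlimsup N hx).symm
end

section
/- Let (S_n) be a random walk not drifting to −∞, with weak descending ladder heights H_k^- and associated renewal function V̲^-(x) = Σ_{k≥0} P(H_k^- < x) (for x > 0, with V̲^-(0)=1). Then E[ V̲^-(S_1) 1{S_1 > 0} ] = 1. -/
open MeasureTheory ProbabilityTheory Filter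
open scoped ENNReal

/-!
Since the steps are i.i.d., everything can be computed on `ℕ → ℝ` under the law `ν = μ^⊗ℕ`.
Integrating the `n`-th term of `V̲⁻` against the law `μ` of `S₁` on `{S₁ > 0}` and using that
`(X₀, (X_{i+1})ᵢ)` has law `μ ⊗ ν` gives the probability that `X₀ > 0` and `n` is a weak
descending ladder epoch of the walk `X₁, X₂, …` of depth less than `X₀`. Reversing the order of
`X₀, …, Xₙ`, which preserves `ν`, turns this into the event that `n + 1` is the first strict
ascending ladder epoch. These events are disjoint in `n`, and since `limsup Sₙ = +∞` the walk
becomes positive almost surely, so their probabilities add up to `1`.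
-/

noncomputable def partialSum (x : ℕ → ℝ) (n : ℕ) : ℝ :=
  ∑ i ∈ Finset.range n, x i

@[fun_prop]
lemma measurable_partialSum (n : ℕ) : Measurable fun x : ℕ → ℝ => partialSum x n := by
  unfold partialSum
  fun_prop

@[simp]
lemma partialSum_zero (x : ℕ → ℝ) : partialSum x 0 = 0 :=
  Finset.sum_range_zero _

lemma partialSum_succ' (x : ℕ → ℝ) (n : ℕ) :
    partialSum x (n + 1) = x 0 + partialSum (fun i => x (i + 1)) n := by
  rw [partialSum, Finset.sum_range_succ', add_comm, partialSum]

def reflectBelow (n i : ℕ) : ℕ := if i ≤ n then n - i else i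

lemma reflectBelow_injective (n : ℕ) : Function.Injective (reflectBelow n) := by
  intro i j h
  unfold reflectBelow at h
  split_ifs at h <;> omega

lemma partialSum_reflectBelow (x : ℕ → ℝ) {n k : ℕ} (hk : k ≤ n + 1) :
    partialSum (fun i => x (reflectBelow n i)) k =
      partialSum x (n + 1) - partialSum x (n + 1 - k) := by
  have h : partialSum (fun i => x (reflectBelow n i)) k = ∑ i ∈ Finset.Ico 0 k, x (n - i) :=
    Finset.sum_congr (Finset.range_eq_Ico k) fun i hi => by
      simp only [reflectBelow, if_pos (show i ≤ n by simp at hi; omega)]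
  rw [h, Finset.sum_Ico_reflect _ _ hk, Nat.sub_zero, eq_sub_iff_add_eq', partialSum, partialSum,
    Finset.range_eq_Ico, Finset.range_eq_Ico,
    Finset.sum_Ico_consecutive _ (Nat.zero_le _) (by omega)]

lemma ProbabilityTheory.iIndepFun.indepFun_zero_tail {Ω β : Type*} [MeasurableSpace Ω]
    [mβ : MeasurableSpace β] {P : Measure Ω} {X : ℕ → Ω → β} (h : iIndepFun X P)
    (hX : ∀ i, Measurable (X i)) :
    IndepFun (X 0) (fun ω i => X (i + 1) ω) P := by
  have key := indep_iSup_of_disjoint (fun i => (hX i).comap_le) h.iIndep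
    (S := {0}) (T := {i | 0 < i}) (by simp)
  rw [IndepFun_iff_Indep]
  refine indep_of_indep_of_le key (le_biSup (fun i => mβ.comap (X i)) (Set.mem_singleton 0)) ?_
  rw [MeasurableSpace.pi, MeasurableSpace.comap_iSup]
  refine iSup_le fun i => ?_
  rw [MeasurableSpace.comap_comp]
  exact le_biSup (fun i => mβ.comap (X i)) (Nat.succ_pos i)

lemma infinitePi_map_zero_tail {β : Type*} [MeasurableSpace β] (μ : Measure β)
    [IsProbabilityMeasure μ] :
    (Measure.infinitePi fun _ : ℕ => μ).map (fun x => (x 0, fun i => x (i + 1))) =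
      μ.prod (Measure.infinitePi fun _ : ℕ => μ) := by
  have hindep : iIndepFun (fun i (x : ℕ → β) => x i) (Measure.infinitePi fun _ : ℕ => μ) :=
    iIndepFun_infinitePi (X := fun _ => id) fun _ => measurable_id
  rw [IndepFun.map_prod_eq_prod_map_map (measurable_pi_apply 0).aemeasurable
      (measurable_pi_lambda _ fun i => measurable_pi_apply (i + 1)).aemeasurable
      (hindep.indepFun_zero_tail fun i => measurable_pi_apply i), Measure.infinitePi_map_eval,
    Measure.map_infinitePi_infinitePi_of_inj Nat.succ_injective]

def weakDescendingLadderEvent (n : ℕ) (t : ℝ) : Set (ℕ → ℝ) :=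
  {x | (∀ j < n, partialSum x n ≤ partialSum x j) ∧ -partialSum x n < t}

/-- The first strict ascending ladder epoch is `n + 1`. -/
def firstAscendingLadderEvent (n : ℕ) : Set (ℕ → ℝ) :=
  {x | (∀ j ≤ n, partialSum x j ≤ 0) ∧ 0 < partialSum x (n + 1)}

lemma measurableSet_weakDescendingLadderEvent (n : ℕ) (t : ℝ) :
    MeasurableSet (weakDescendingLadderEvent n t) := by
  unfold weakDescendingLadderEvent
  measurability

lemma measurableSet_firstAscendingLadderEvent (n : ℕ) :
    MeasurableSet (firstAscendingLadderEvent n) := by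
  unfold firstAscendingLadderEvent
  measurability

lemma monotone_weakDescendingLadderEvent (n : ℕ) : Monotone (weakDescendingLadderEvent n) :=
  fun _ _ hst _ hx => ⟨hx.1, hx.2.trans_le hst⟩

lemma measurable_measure_weakDescendingLadderEvent (ν : Measure (ℕ → ℝ)) (n : ℕ) :
    Measurable fun t => ν (weakDescendingLadderEvent n t) :=
  Monotone.measurable fun _ _ hst => measure_mono (monotone_weakDescendingLadderEvent n hst)

lemma pairwise_disjoint_firstAscendingLadderEvent :
    Pairwise (Function.onFun Disjoint firstAscendingLadderEvent) :=
  (pairwise_disjoint_on _).mpr fun _ _ hmn => Set.disjoint_left.mpr fun _ hm hn =>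
    (hn.1 _ hmn).not_gt hm.2

lemma exists_mem_firstAscendingLadderEvent {x : ℕ → ℝ} (h : ∃ m, 0 < partialSum x m) :
    ∃ n, x ∈ firstAscendingLadderEvent n := by
  classical
  obtain ⟨n, hn⟩ : ∃ n, Nat.find h = n + 1 :=
    Nat.exists_eq_succ_of_ne_zero fun h0 => by
      have := Nat.find_spec h
      rw [h0] at this
      simp at this
  exact ⟨n, fun j hj => not_lt.mp (Nat.find_min h (by omega)), hn ▸ Nat.find_spec h⟩

lemma preimage_reflectBelow_firstAscendingLadderEvent (n : ℕ) :
    (fun (x : ℕ → ℝ) i => x (reflectBelow n i)) ⁻¹' firstAscendingLadderEvent n =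
      {x : ℕ → ℝ | 0 < x 0 ∧ (fun i => x (i + 1)) ∈ weakDescendingLadderEvent n (x 0)} := by
  ext x
  have htail (j : ℕ) : partialSum (fun i => x (i + 1)) j = partialSum x (j + 1) - x 0 := by
    rw [partialSum_succ']
    ring
  have hlast : partialSum (fun i => x (reflectBelow n i)) (n + 1) = partialSum x (n + 1) := by
    rw [partialSum_reflectBelow x le_rfl, Nat.sub_self, partialSum_zero, sub_zero]
  simp only [firstAscendingLadderEvent, weakDescendingLadderEvent, Set.mem_preimage,
    Set.mem_ofPred_eq, htail, hlast]
  constructor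
  · rintro ⟨hle, hpos⟩
    have key (j : ℕ) (hj : j ≤ n) : partialSum x (n + 1) ≤ partialSum x (j + 1) := by
      have := hle (n - j) (by omega)
      rw [partialSum_reflectBelow x (by omega), show n + 1 - (n - j) = j + 1 by omega] at this
      linarith
    have h1 : partialSum x 1 = x 0 := by simp [partialSum]
    exact ⟨by linarith [key 0 (Nat.zero_le n)], fun j hj => by linarith [key j hj.le],
      by linarith⟩
  · rintro ⟨h0, hle, hlt⟩
    refine ⟨fun j hj => ?_, by linarith⟩
    rw [partialSum_reflectBelow x (by omega)]
    rcases Nat.eq_zero_or_pos j with rfl | hj0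
    · simp
    · have := hle (n - j) (by omega)
      rw [show n - j + 1 = n + 1 - j by omega] at this
      linarith

lemma setLIntegral_measure_weakDescendingLadderEvent (μ : Measure ℝ) [IsProbabilityMeasure μ]
    (n : ℕ) :
    ∫⁻ t in Set.Ioi 0, Measure.infinitePi (fun _ => μ) (weakDescendingLadderEvent n t) ∂μ =
      Measure.infinitePi (fun _ => μ) (firstAscendingLadderEvent n) := by
  set ν := Measure.infinitePi fun _ : ℕ => μ
  set E := {p : ℝ × (ℕ → ℝ) | 0 < p.1 ∧ p.2 ∈ weakDescendingLadderEvent n p.1}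
  have hE : MeasurableSet E := by
    simp only [E, weakDescendingLadderEvent, Set.mem_ofPred_eq]
    measurability
  calc ∫⁻ t in Set.Ioi 0, ν (weakDescendingLadderEvent n t) ∂μ
      = ∫⁻ t, ν (Prod.mk t ⁻¹' E) ∂μ := by
        rw [← lintegral_indicator measurableSet_Ioi]
        refine lintegral_congr fun t => ?_
        by_cases ht : 0 < t <;> simp [E, ht, Set.indicator]
    _ = (μ.prod ν) E := (Measure.prod_apply hE).symm
    _ = ν ((fun x i => x (reflectBelow n i)) ⁻¹' firstAscendingLadderEvent n) := by
      rw [← infinitePi_map_zero_tail, Measure.map_apply (by fun_prop) hE,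
        preimage_reflectBelow_firstAscendingLadderEvent]
      rfl
    _ = ν (firstAscendingLadderEvent n) := by
      rw [← Measure.map_apply (by fun_prop) (measurableSet_firstAscendingLadderEvent n),
        Measure.map_infinitePi_infinitePi_of_inj (reflectBelow_injective n)]

theorem setLIntegral_tsum_measure_weakDescendingLadderEvent (μ : Measure ℝ)
    [IsProbabilityMeasure μ]
    (h : ∀ᵐ x ∂(Measure.infinitePi fun _ : ℕ => μ), ∃ m, 0 < partialSum x m) :
    ∫⁻ t in Set.Ioi 0, ∑' n, Measure.infinitePi (fun _ => μ) (weakDescendingLadderEvent n t) ∂μ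
      = 1 := by
  rw [lintegral_tsum fun n => (measurable_measure_weakDescendingLadderEvent _ n).aemeasurable]
  simp_rw [setLIntegral_measure_weakDescendingLadderEvent]
  have hU : ∀ᵐ x ∂(Measure.infinitePi fun _ : ℕ => μ), x ∈ ⋃ n, firstAscendingLadderEvent n :=
    h.mono fun x hx => Set.mem_iUnion.mpr (exists_mem_firstAscendingLadderEvent hx)
  rw [← measure_iUnion pairwise_disjoint_firstAscendingLadderEvent
      measurableSet_firstAscendingLadderEvent,
    (ae_mem_iff_measure_eq (MeasurableSet.iUnion
      measurableSet_firstAscendingLadderEvent).nullMeasurableSet).mp hU, measure_univ]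

/-- for a walk not drifting to `-∞`, `E[V̲⁻(S₁) 1{S₁ > 0}] = 1`. -/
theorem stmt9 {Ω : Type*} [MeasurableSpace Ω] (P : Measure Ω) [IsProbabilityMeasure P]
    (X : ℕ → Ω → ℝ) (hmeas : ∀ i, Measurable (X i))
    (hindep : iIndepFun X P)
    (hident : ∀ i, IdentDistrib (X i) (X 0) P P)
    (hlimsup : ∀ᵐ ω ∂P, ∀ M : ℝ, ∃ᶠ n in atTop, M < rwS X n ω) :
    ∫⁻ ω in {ω | 0 < rwS X 1 ω}, VminusBar P X (rwS X 1 ω) ∂P = 1 := by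
  set μ := P.map (X 0)
  have : IsProbabilityMeasure μ := Measure.isProbabilityMeasure_map (hmeas 0).aemeasurable
  set ν := Measure.infinitePi fun _ : ℕ => μ
  have hseq : Measurable fun ω i => X i ω := measurable_pi_lambda _ hmeas
  have hlaw : P.map (fun ω i => X i ω) = ν :=
    (hindep.hasLaw_infinitePi (fun i => ⟨(hmeas i).aemeasurable, (hident i).map_eq⟩)
      hseq.aemeasurable).map_eq
  have hV (t : ℝ) (ht : t ≠ 0) : VminusBar P X t = ∑' n, ν (weakDescendingLadderEvent n t) := by
    rw [VminusBar, if_neg ht, ← hlaw]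
    exact tsum_congr fun n =>
      (Measure.map_apply hseq (measurableSet_weakDescendingLadderEvent n t)).symm
  have hasc : ∀ᵐ x ∂ν, ∃ m, 0 < partialSum x m := by
    rw [← hlaw, ae_map_iff hseq.aemeasurable (by measurability)]
    exact hlimsup.mono fun ω h => (h 0).exists
  have hS1 (ω : Ω) : rwS X 1 ω = X 0 ω := by simp [rwS]
  simp only [hS1]
  calc ∫⁻ ω in X 0 ⁻¹' Set.Ioi 0, VminusBar P X (X 0 ω) ∂P
      = ∫⁻ ω in X 0 ⁻¹' Set.Ioi 0, ∑' n, ν (weakDescendingLadderEvent n (X 0 ω)) ∂P :=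
        setLIntegral_congr_fun (hmeas 0 measurableSet_Ioi) fun ω hω => hV _ (ne_of_gt hω)
    _ = ∫⁻ t in Set.Ioi 0, ∑' n, ν (weakDescendingLadderEvent n t) ∂μ :=
        (setLIntegral_map measurableSet_Ioi (Measurable.tsum fun n =>
          measurable_measure_weakDescendingLadderEvent ν n) (hmeas 0)).symm
    _ = 1 := setLIntegral_tsum_measure_weakDescendingLadderEvent μ hasc
end

section
/- Let φ : ℝ → [0,∞) be directly Riemann integrable, i.e., Θ(Δ) := Σ_{w ∈ Δℤ} Δ · sup_{u ∈ [w, w+Δ)} φ(u) < ∞ for some (hence all) Δ > 0. Then for every Δ_0 > 0 and every η > 0 there exists M > 0 such that for all Δ ∈ (0, Δ_0): Σ_{w ∈ Δℤ, |w| > M} Δ · sup_{u ∈ [w, w+Δ)} φ(u) < η. In particular, M can be chosen uniformly in the mesh Δ ∈ (0, Δ_0). -/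
/-!
Since `Θ(2Δ) ≤ 4 Θ(Δ)`, the upper sum is finite at some mesh `δ ≥ Δ₀`. For `Δ ≤ δ`, every
`Δ`-cell lies in two consecutive `δ`-cells, and each `δ`-cell receives at most `δ/Δ + 1` of the
`Δ`-cells, of total length `≤ 2δ`; so the `Δ`-tail beyond `M + δ` is at most four times the
`δ`-tail beyond `M`, which is small for large `M`, whatever `Δ`.
-/

open scoped ENNReal

/-- The upper Riemann sum `Θ(Δ) = Σ_{w ∈ Δℤ} Δ · sup_{u ∈ [w, w+Δ)} φ(u)` (in `ℝ≥0∞`). -/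
noncomputable def upperSum (φ : ℝ → ℝ) (Δ : ℝ) : ℝ≥0∞ :=
  ∑' k : ℤ, ENNReal.ofReal Δ *
    ⨆ u ∈ Set.Ico ((k : ℝ) * Δ) ((k : ℝ) * Δ + Δ), ENNReal.ofReal (φ u)

theorem tsum_mul_comp_le_of_tsum_fiber_le {α β : Type*} (m : α → β) (w : α → ℝ≥0∞)
    (g : β → ℝ≥0∞) {c : ℝ≥0∞} (hc : ∀ j, ∑' k : m ⁻¹' {j}, w k ≤ c) :
    ∑' k, w k * g (m k) ≤ c * ∑' j, g j := by
  rw [← ENNReal.tsum_fiberwise _ m, ← ENNReal.tsum_mul_left]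
  refine ENNReal.tsum_le_tsum fun j => ?_
  calc ∑' k : m ⁻¹' {j}, w k * g (m k) = ∑' k : m ⁻¹' {j}, w k * g j :=
        tsum_congr fun k => by rw [k.2]
    _ = (∑' k : m ⁻¹' {j}, w k) * g j := ENNReal.tsum_mul_right
    _ ≤ c * g j := by gcongr; exact hc j

theorem setOf_floor_mul_div_eq {Δ δ : ℝ} (hΔ : 0 < Δ) (hδ : 0 < δ) (j : ℤ) :
    {k : ℤ | ⌊(k : ℝ) * Δ / δ⌋ = j} = Set.Ico ⌈j * δ / Δ⌉ ⌈(j * δ + δ) / Δ⌉ := by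
  ext k
  simp only [Set.mem_ofPred_eq, Set.mem_Ico, Int.floor_eq_iff, Int.ceil_le, Int.lt_ceil,
    le_div_iff₀ hδ, div_lt_iff₀ hδ, div_le_iff₀ hΔ, lt_div_iff₀ hΔ]
  constructor <;> rintro ⟨h1, h2⟩ <;> constructor <;> linarith

theorem ofReal_mul_encard_floor_fiber_le {Δ δ : ℝ} (hΔ : 0 < Δ) (hΔδ : Δ ≤ δ) (j : ℤ) :
    ENNReal.ofReal Δ * {k : ℤ | ⌊(k : ℝ) * Δ / δ⌋ = j}.encard ≤ ENNReal.ofReal (2 * δ) := by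
  have hδ : 0 < δ := hΔ.trans_le hΔδ
  rw [setOf_floor_mul_div_eq hΔ hδ, ← Finset.coe_Ico, Set.encard_coe_eq_coe_finsetCard,
    Int.card_Ico]
  have hceil : ⌈(j * δ + δ) / Δ⌉ - ⌈j * δ / Δ⌉ ≤ ⌈δ / Δ⌉ := by
    have := Int.ceil_add_le (j * δ / Δ) (δ / Δ)
    rw [← add_div] at this; omega
  have hn : ((⌈(j * δ + δ) / Δ⌉ - ⌈j * δ / Δ⌉).toNat : ℝ) < δ / Δ + 1 := by
    have hle : ((⌈(j * δ + δ) / Δ⌉ - ⌈j * δ / Δ⌉).toNat : ℤ) ≤ ⌈δ / Δ⌉ := by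
      have := Int.ceil_pos.2 (div_pos hδ hΔ); omega
    calc ((⌈(j * δ + δ) / Δ⌉ - ⌈j * δ / Δ⌉).toNat : ℝ) ≤ ⌈δ / Δ⌉ := by exact_mod_cast hle
      _ < δ / Δ + 1 := Int.ceil_lt_add_one _
  rw [ENat.toENNReal_coe, ← ENNReal.ofReal_natCast, ← ENNReal.ofReal_mul hΔ.le]
  refine ENNReal.ofReal_le_ofReal ?_
  have := (mul_lt_mul_iff_right₀ hΔ).2 hn
  rw [mul_add, mul_div_cancel₀ _ hΔ.ne'] at this
  linarith

noncomputable def cellSup (φ : ℝ → ℝ) (Δ : ℝ) (k : ℤ) : ℝ≥0∞ :=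
  ⨆ u ∈ Set.Ico ((k : ℝ) * Δ) ((k : ℝ) * Δ + Δ), ENNReal.ofReal (φ u)

noncomputable def tailSum (φ : ℝ → ℝ) (Δ M : ℝ) : ℝ≥0∞ :=
  ∑' k : {k : ℤ // M < |(k : ℝ) * Δ|}, ENNReal.ofReal Δ * cellSup φ Δ k

theorem upperSum_eq_tsum_cellSup (φ : ℝ → ℝ) (Δ : ℝ) :
    upperSum φ Δ = ∑' k : ℤ, ENNReal.ofReal Δ * cellSup φ Δ k := rfl

theorem cellSup_le_add_of_subset (φ : ℝ → ℝ) {Δ δ δ' : ℝ} {k i j : ℤ}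
    (h : Set.Ico ((k : ℝ) * Δ) (k * Δ + Δ) ⊆
      Set.Ico ((i : ℝ) * δ) (i * δ + δ) ∪ Set.Ico ((j : ℝ) * δ') (j * δ' + δ')) :
    cellSup φ Δ k ≤ cellSup φ δ i + cellSup φ δ' j := by
  refine iSup₂_le fun u hu => ?_
  rcases h hu with hu | hu
  · exact le_add_right (le_iSup₂_of_le u hu le_rfl)
  · exact le_add_left (le_iSup₂_of_le u hu le_rfl)

theorem upperSum_two_mul_le (φ : ℝ → ℝ) (Δ : ℝ) :
    upperSum φ (2 * Δ) ≤ 4 * upperSum φ Δ := by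
  set f : ℤ → ℝ≥0∞ := fun k => ENNReal.ofReal Δ * cellSup φ Δ k
  have hsplit (k : ℤ) : cellSup φ (2 * Δ) k ≤ cellSup φ Δ (2 * k) + cellSup φ Δ (2 * k + 1) :=
    cellSup_le_add_of_subset φ fun u ⟨hu₁, hu₂⟩ => by
      rcases lt_or_ge u ((2 * k + 1 : ℤ) * Δ) with h | h
      · exact .inl ⟨by push_cast at h ⊢; linarith, by push_cast at h ⊢; linarith⟩
      · exact .inr ⟨h, by push_cast at h ⊢; linarith⟩
  have heven : ∑' k : ℤ, f (2 * k) ≤ upperSum φ Δ :=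
    ENNReal.tsum_comp_le_tsum_of_injective (fun a b h => by simpa using h) f
  have hodd : ∑' k : ℤ, f (2 * k + 1) ≤ upperSum φ Δ :=
    ENNReal.tsum_comp_le_tsum_of_injective (fun a b h => by simpa using h) f
  calc upperSum φ (2 * Δ) = ∑' k : ℤ, 2 * (ENNReal.ofReal Δ * cellSup φ (2 * Δ) k) := by
        simp only [upperSum_eq_tsum_cellSup, ENNReal.ofReal_mul zero_le_two, mul_assoc,
          ENNReal.ofReal_ofNat]
    _ ≤ ∑' k : ℤ, 2 * (f (2 * k) + f (2 * k + 1)) := by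
        gcongr with k; rw [← mul_add]; gcongr; exact hsplit k
    _ = 2 * (∑' k : ℤ, f (2 * k) + ∑' k : ℤ, f (2 * k + 1)) := by
        rw [ENNReal.tsum_mul_left, ENNReal.tsum_add]
    _ ≤ 2 * (upperSum φ Δ + upperSum φ Δ) := by gcongr
    _ = 4 * upperSum φ Δ := by ring

theorem upperSum_two_pow_mul_lt_top (φ : ℝ → ℝ) {Δ : ℝ} (h : upperSum φ Δ < ⊤) (n : ℕ) :
    upperSum φ (2 ^ n * Δ) < ⊤ := by
  induction n with
  | zero => simpa using h
  | succ n ih =>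
    rw [pow_succ', mul_assoc]
    exact (upperSum_two_mul_le φ _).trans_lt (ENNReal.mul_lt_top (by norm_num) ih)

theorem cellSup_le_cellSup_floor_add (φ : ℝ → ℝ) {Δ δ : ℝ} (hδ : 0 < δ) (hΔδ : Δ ≤ δ)
    (k : ℤ) :
    cellSup φ Δ k ≤ cellSup φ δ ⌊(k : ℝ) * Δ / δ⌋ + cellSup φ δ (⌊(k : ℝ) * Δ / δ⌋ + 1) := by
  have h₀ := Int.sub_floor_div_mul_nonneg ((k : ℝ) * Δ) hδ
  have h₁ := Int.sub_floor_div_mul_lt ((k : ℝ) * Δ) hδ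
  refine cellSup_le_add_of_subset φ fun u ⟨hu₁, hu₂⟩ => ?_
  rcases lt_or_ge u (⌊(k : ℝ) * Δ / δ⌋ * δ + δ) with h | h
  · exact .inl ⟨by linarith, h⟩
  · exact .inr ⟨by push_cast; linarith, by push_cast; linarith⟩

theorem lt_abs_floor_div_mul_of_add_lt_abs {δ M x : ℝ} (hδ : 0 < δ) (hx : M + δ < |x|) :
    M < |⌊x / δ⌋ * δ| ∧ M < |(⌊x / δ⌋ + 1) * δ| := by
  have h₀ := Int.sub_floor_div_mul_nonneg x hδ
  have h₁ := Int.sub_floor_div_mul_lt x hδ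
  have hnear (y : ℝ) (hy : |y - x| ≤ δ) : M < |y| := by
    have := abs_sub_abs_le_abs_sub x y
    rw [abs_sub_comm] at hy
    linarith
  exact ⟨hnear _ (abs_le.2 ⟨by linarith, by linarith⟩),
    hnear _ (abs_le.2 ⟨by linarith, by linarith⟩)⟩

theorem tailSum_add_le (φ : ℝ → ℝ) {Δ δ : ℝ} (hΔ : 0 < Δ) (hΔδ : Δ ≤ δ) (M : ℝ) :
    tailSum φ Δ (M + δ) ≤ 4 * tailSum φ δ M := by
  have hδ : 0 < δ := hΔ.trans_le hΔδ
  set m : ℤ → ℤ := fun k => ⌊(k : ℝ) * Δ / δ⌋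
  set S : Set ℤ := {k | M + δ < |(k : ℝ) * Δ|}
  set T : Set ℤ := {j | M < |(j : ℝ) * δ|}
  set G : ℤ → ℝ≥0∞ := T.indicator (cellSup φ δ)
  have hcover (k : ℤ) :
      S.indicator (fun k => ENNReal.ofReal Δ * cellSup φ Δ k) k ≤
        ENNReal.ofReal Δ * G (m k) + ENNReal.ofReal Δ * G (m k + 1) := by
    by_cases hk : k ∈ S
    · obtain ⟨hT₀, hT₁⟩ := lt_abs_floor_div_mul_of_add_lt_abs hδ hk
      have hG₀ : G (m k) = cellSup φ δ (m k) := Set.indicator_of_mem (s := T) hT₀ _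
      have hG₁ : G (m k + 1) = cellSup φ δ (m k + 1) :=
        Set.indicator_of_mem (s := T) (by exact_mod_cast hT₁) _
      rw [Set.indicator_of_mem hk, ← mul_add, hG₀, hG₁]
      exact mul_le_mul_right (cellSup_le_cellSup_floor_add φ hδ hΔδ k) _
    · rw [Set.indicator_of_notMem hk]
      exact zero_le
  have hfiber (j : ℤ) : ∑' _ : m ⁻¹' {j}, ENNReal.ofReal Δ ≤ ENNReal.ofReal (2 * δ) := by
    rw [ENNReal.tsum_const, mul_comm]
    exact ofReal_mul_encard_floor_fiber_le hΔ hΔδ j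
  have hshift : ∑' j, G (j + 1) = ∑' j, G j := (Equiv.addRight 1).tsum_eq G
  have htail : tailSum φ δ M = ENNReal.ofReal δ * ∑' j, G j := by
    rw [tailSum, ENNReal.tsum_mul_left, ← tsum_subtype]
    rfl
  calc tailSum φ Δ (M + δ)
      = ∑' k, S.indicator (fun k => ENNReal.ofReal Δ * cellSup φ Δ k) k :=
        tsum_subtype S (fun k => ENNReal.ofReal Δ * cellSup φ Δ k)
    _ ≤ ∑' k, (ENNReal.ofReal Δ * G (m k) + ENNReal.ofReal Δ * G (m k + 1)) :=
        ENNReal.tsum_le_tsum hcover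
    _ ≤ ENNReal.ofReal (2 * δ) * ∑' j, G j + ENNReal.ofReal (2 * δ) * ∑' j, G (j + 1) := by
        rw [ENNReal.tsum_add]
        exact add_le_add (tsum_mul_comp_le_of_tsum_fiber_le m _ G hfiber)
          (tsum_mul_comp_le_of_tsum_fiber_le m _ (fun j => G (j + 1)) hfiber)
    _ = 4 * tailSum φ δ M := by
        rw [hshift, htail, ENNReal.ofReal_mul zero_le_two, ENNReal.ofReal_ofNat]
        ring

theorem exists_nonneg_tailSum_lt (φ : ℝ → ℝ) {δ : ℝ} (h : upperSum φ δ ≠ ⊤) {ε : ℝ≥0∞}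
    (hε : 0 < ε) : ∃ M, 0 ≤ M ∧ tailSum φ δ M < ε := by
  obtain ⟨F, hF⟩ := ((ENNReal.tendsto_tsum_compl_atTop_zero h).eventually
    (gt_mem_nhds hε)).exists
  refine ⟨∑ j ∈ F, |(j : ℝ) * δ|, F.sum_nonneg fun _ _ => abs_nonneg _, ?_⟩
  refine lt_of_le_of_lt (ENNReal.tsum_mono_subtype (fun j => ENNReal.ofReal δ * cellSup φ δ j)
    (s := {j | _ < |(j : ℝ) * δ|}) (t := {j | j ∉ F}) fun j hj hjF => ?_) hF
  exact (Finset.single_le_sum (f := fun j : ℤ => |(j : ℝ) * δ|) (fun _ _ => abs_nonneg _)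
    hjF).not_gt hj

theorem stmt14_general (φ : ℝ → ℝ)
    (hdri : ∃ Δ : ℝ, 0 < Δ ∧ upperSum φ Δ < ⊤) :
    ∀ Δ₀ : ℝ, 0 < Δ₀ → ∀ η : ℝ, 0 < η → ∃ M : ℝ, 0 < M ∧
      ∀ Δ : ℝ, 0 < Δ → Δ < Δ₀ →
        (∑' k : {k : ℤ // M < |(k : ℝ) * Δ|},
            ENNReal.ofReal Δ *
              ⨆ u ∈ Set.Ico (((k : ℤ) : ℝ) * Δ) (((k : ℤ) : ℝ) * Δ + Δ),
                ENNReal.ofReal (φ u))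
          < ENNReal.ofReal η := by
  intro Δ₀ _ η hη
  obtain ⟨Δ₁, hΔ₁, hfin⟩ := hdri
  obtain ⟨n, hn⟩ := pow_unbounded_of_one_lt (Δ₀ / Δ₁) one_lt_two
  have hΔ₀δ : Δ₀ < 2 ^ n * Δ₁ := (div_lt_iff₀ hΔ₁).1 hn
  obtain ⟨M, hM, htail⟩ := exists_nonneg_tailSum_lt φ (ε := ENNReal.ofReal η / 4)
    (upperSum_two_pow_mul_lt_top φ hfin n).ne
    (ENNReal.div_pos (ENNReal.ofReal_pos.2 hη).ne' (by norm_num))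
  refine ⟨M + 2 ^ n * Δ₁, by positivity, fun Δ hΔ hΔΔ₀ => ?_⟩
  calc tailSum φ Δ (M + 2 ^ n * Δ₁) ≤ 4 * tailSum φ (2 ^ n * Δ₁) M :=
        tailSum_add_le φ hΔ (by linarith) M
    _ < ENNReal.ofReal η := ENNReal.mul_lt_of_lt_div' htail

/-- if `φ` is directly Riemann integrable, then for every `Δ₀ > 0` and `η > 0`
there is `M > 0` such that, uniformly in the mesh `Δ ∈ (0, Δ₀)`, the contribution to the
upper Riemann sum of the lattice points `w ∈ Δℤ` with `|w| > M` is less than `η`. -/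
theorem stmt14 (φ : ℝ → ℝ) (hφ : ∀ x, 0 ≤ φ x)
    (hdri : ∃ Δ : ℝ, 0 < Δ ∧ upperSum φ Δ < ⊤) :
    ∀ Δ₀ : ℝ, 0 < Δ₀ → ∀ η : ℝ, 0 < η → ∃ M : ℝ, 0 < M ∧
      ∀ Δ : ℝ, 0 < Δ → Δ < Δ₀ →
        (∑' k : {k : ℤ // M < |(k : ℝ) * Δ|},
            ENNReal.ofReal Δ *
              ⨆ u ∈ Set.Ico (((k : ℤ) : ℝ) * Δ) (((k : ℤ) : ℝ) * Δ + Δ),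
                ENNReal.ofReal (φ u))
          < ENNReal.ofReal η :=
  stmt14_general φ hdri
end

section
/- Let (K(n))_{n≥1} be nonnegative with Σ K(n) = ζ ∈ (0,1), and suppose K(n) ~ c n^{-1-γ} as n → ∞ for some c > 0 and γ > 0 (more generally K(n) is regularly varying with index −1−γ). Then the defective renewal mass function u(n) := Σ_{m≥0} K^{*m}(n) satisfies u(n) ~ K(n) / (1 − ζ)² as n → ∞. -/
/-!
Write `ζ = ∑ K < 1` and `p n = n ^ (-(1 + γ))`, so that `K ≤ M p`. Kesten's bound
`K^{*m}(n) ≤ B m q^m p(n)` with `q < 1` holds by induction on `m`: in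
`K^{*(m+1)}(n) = ∑ⱼ K^{*m}(n - j) K(j)`, the jumps `j` from a finite set `S` barely change `p`,
the other jumps `j ≤ n / 2` carry total mass `≤ ε`, and the jumps `j > n / 2` are each `O(p n)`
against the total mass `ζ^m` of `K^{*m}`. For fixed `m`, the one-big-jump principle
`(a ∗ b)(n) / p(n) → (∑ a) β + (∑ b) α` (whenever `a / p → α`, `b / p → β`) gives
`K^{*m}(n) / p(n) → c m ζ^(m-1)`. Dominated convergence over `m` then yields
`u(n) / p(n) → c ∑ₘ m ζ^(m-1) = c / (1 - ζ)²`.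
-/

open Filter

/-- `convPow K m` is the `m`-fold convolution of `K` on `ℕ`, with `convPow K 0 = δ₀`. -/
noncomputable def convPow (K : ℕ → ℝ) : ℕ → ℕ → ℝ
  | 0 => fun n => if n = 0 then 1 else 0
  | (m + 1) => fun n => ∑ k ∈ Finset.range (n + 1), convPow K m k * K (n - k)

open Finset Topology

namespace convPow

variable {K : ℕ → ℝ}

lemma succ_apply (K : ℕ → ℝ) (m n : ℕ) :
    convPow K (m + 1) n = ∑ k ∈ range (n + 1), convPow K m k * K (n - k) := rfl

lemma zero_apply_of_ne_zero (K : ℕ → ℝ) {n : ℕ} (hn : n ≠ 0) : convPow K 0 n = 0 := if_neg hn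

lemma one_apply (K : ℕ → ℝ) (n : ℕ) : convPow K 1 n = K n := by
  rw [succ_apply, sum_eq_single 0]
  · simp [convPow]
  · intro k _ hk
    simp [convPow, hk]
  · simp

lemma succ_apply_eq_sum_reflect (K : ℕ → ℝ) (m n : ℕ) :
    convPow K (m + 1) n = ∑ j ∈ range (n + 1), convPow K m (n - j) * K j := by
  rw [succ_apply, ← sum_range_reflect]
  refine sum_congr rfl fun j hj => ?_
  rw [mem_range] at hj
  rw [show n + 1 - 1 - j = n - j by omega, Nat.sub_sub_self (by omega)]

lemma nonneg (hK : ∀ n, 0 ≤ K n) (m n : ℕ) : 0 ≤ convPow K m n := by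
  induction m generalizing n with
  | zero => unfold convPow; positivity
  | succ m ih => exact sum_nonneg fun k _ => mul_nonneg (ih k) (hK _)

lemma summable_norm (hK : Summable K) (m : ℕ) : Summable fun n => ‖convPow K m n‖ := by
  induction m with
  | zero =>
    refine summable_of_ne_finset_zero (s := {0}) fun n hn => ?_
    rw [zero_apply_of_ne_zero K (by simpa using hn), norm_zero]
  | succ m ih =>
    exact summable_norm_sum_mul_range_of_summable_norm ih (summable_abs_iff.mpr hK)

lemma tsum_eq (hK : Summable K) (m : ℕ) : ∑' n, convPow K m n = (∑' n, K n) ^ m := by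
  induction m with
  | zero =>
    rw [pow_zero, tsum_eq_single 0 fun n hn => zero_apply_of_ne_zero K hn]
    rfl
  | succ m ih =>
    rw [pow_succ, ← ih, tsum_mul_tsum_eq_tsum_sum_range_of_summable_norm (summable_norm hK m)
      (summable_abs_iff.mpr hK)]
    rfl

lemma sum_range_le (hK : ∀ n, 0 ≤ K n) (hs : Summable K) (m n : ℕ) :
    ∑ k ∈ range n, convPow K m k ≤ (∑' n, K n) ^ m := by
  rw [← tsum_eq hs]
  exact (summable_norm hs m).of_norm.sum_le_tsum _ fun k _ => nonneg hK m k

lemma le_pow (hK : ∀ n, 0 ≤ K n) (hs : Summable K) (m n : ℕ) : convPow K m n ≤ (∑' n, K n) ^ m := by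
  calc convPow K m n ≤ ∑ k ∈ range (n + 1), convPow K m k :=
        single_le_sum (fun k _ => nonneg hK m k) (self_mem_range_succ n)
    _ ≤ _ := sum_range_le hK hs m (n + 1)

end convPow

lemma exists_abs_le_mul_of_tendsto_div {f p : ℕ → ℝ} {c : ℝ} (hp : ∀ n, 1 ≤ n → 0 < p n)
    (h : Tendsto (fun n => f n / p n) atTop (𝓝 c)) :
    ∃ M, 0 ≤ M ∧ ∀ n, 1 ≤ n → |f n| ≤ M * p n := by
  obtain ⟨M, hM⟩ := h.abs.bddAbove_range
  refine ⟨M, (abs_nonneg _).trans (hM ⟨0, rfl⟩), fun n hn => ?_⟩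
  rw [← div_le_iff₀ (hp n hn), ← abs_of_pos (hp n hn), ← abs_div]
  exact hM ⟨n, rfl⟩

lemma sum_range_mul_sub_split (a b : ℕ → ℝ) (n : ℕ) :
    ∑ k ∈ range (n + 1), a k * b (n - k) =
      ∑ k ∈ range (n + 1) with 2 * k ≤ n, a k * b (n - k) +
        ∑ j ∈ range (n + 1) with 2 * j < n, b j * a (n - j) := by
  rw [← sum_filter_add_sum_filter_not _ (fun k => 2 * k ≤ n)]
  congr 1
  rw [sum_filter, sum_filter, ← sum_range_reflect]
  refine sum_congr rfl fun j hj => ?_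
  rw [mem_range] at hj
  rw [show n + 1 - 1 - j = n - j by omega, Nat.sub_sub_self (by omega), mul_comm (b j)]
  exact if_congr (by omega) rfl rfl

lemma hasSum_nat_mul_pow_sub_one {𝕜 : Type*} [NormedField 𝕜] [CompleteSpace 𝕜] {r : 𝕜}
    (hr : ‖r‖ < 1) : HasSum (fun m : ℕ => (m : 𝕜) * r ^ (m - 1)) (1 / (1 - r) ^ 2) := by
  rw [← hasSum_nat_add_iff' 1]
  simpa [add_comm 1] using hasSum_choose_mul_geometric_of_norm_lt_one 1 hr

/-- Covers `n ^ (-s)` and, more generally, regularly varying weights of negative index. -/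
structure IsDominatedLongTailed (p : ℕ → ℝ) (A : ℝ) : Prop where
  pos : ∀ n, 1 ≤ n → 0 < p n
  le_of_le_two_mul : ∀ n k, 1 ≤ n → n ≤ 2 * k → p k ≤ A * p n
  tendsto_sub_div : ∀ k, Tendsto (fun n => p (n - k) / p n) atTop (𝓝 1)

namespace IsDominatedLongTailed

variable {K p : ℕ → ℝ} {A M c : ℝ}

lemma one_le (hp : IsDominatedLongTailed p A) : 1 ≤ A :=
  le_of_mul_le_mul_right (by simpa using hp.le_of_le_two_mul 1 1 le_rfl (by norm_num))
    (hp.pos 1 le_rfl)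

lemma tendsto_sub_div_of_tendsto (hp : IsDominatedLongTailed p A) {b : ℕ → ℝ} {β : ℝ}
    (hb : Tendsto (fun n => b n / p n) atTop (𝓝 β)) (k : ℕ) :
    Tendsto (fun n => b (n - k) / p n) atTop (𝓝 β) := by
  have h := (hb.comp (tendsto_sub_atTop_nat k)).mul (hp.tendsto_sub_div k)
  rw [mul_one] at h
  refine h.congr' ?_
  filter_upwards [eventually_gt_atTop k] with n hn
  simp only [Function.comp_apply]
  rw [div_mul_div_cancel₀ (hp.pos _ (by omega)).ne']

lemma rpow_neg {s : ℝ} (hs : 0 ≤ s) :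
    IsDominatedLongTailed (fun n => (n : ℝ) ^ (-s)) (2 ^ s) where
  pos n hn := Real.rpow_pos_of_pos (by exact_mod_cast hn) _
  le_of_le_two_mul n k hn hnk := by
    have hn' : (0 : ℝ) < n / 2 := by positivity
    calc (k : ℝ) ^ (-s) ≤ ((n : ℝ) / 2) ^ (-s) :=
          Real.rpow_le_rpow_of_nonpos hn' (by rw [div_le_iff₀' two_pos]; exact_mod_cast hnk)
            (by linarith)
      _ = 2 ^ s * (n : ℝ) ^ (-s) := by
          rw [Real.div_rpow (Nat.cast_nonneg n) zero_le_two, Real.rpow_neg zero_le_two]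
          field_simp
  tendsto_sub_div k := by
    have hratio : Tendsto (fun n : ℕ => 1 - (k : ℝ) / n) atTop (𝓝 1) := by
      simpa using tendsto_const_nhds.sub (tendsto_const_div_atTop_nhds_zero_nat (k : ℝ))
    have hcont := (Real.continuousAt_rpow_const 1 (-s) (Or.inl one_ne_zero)).tendsto
    rw [Real.one_rpow] at hcont
    refine (hcont.comp hratio).congr' ?_
    filter_upwards [eventually_gt_atTop k] with n hn
    have hn0 : (0 : ℝ) < n := by exact_mod_cast (Nat.zero_le k).trans_lt hn
    have hnk : (0 : ℝ) ≤ n - k := sub_nonneg.mpr (by exact_mod_cast hn.le)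
    rw [Function.comp_apply, Nat.cast_sub hn.le, ← Real.div_rpow hnk hn0.le, sub_div,
      div_self hn0.ne']

lemma tendsto_sum_filter_mul_div (hp : IsDominatedLongTailed p A) {a b : ℕ → ℝ} {β : ℝ}
    (ha : Summable a) (hb : Tendsto (fun n => b n / p n) atTop (𝓝 β))
    (P : ℕ → ℕ → Prop) [∀ n, DecidablePred (P n)] (hP : ∀ n k, P n k → 2 * k ≤ n)
    (hPk : ∀ k, ∀ᶠ n in atTop, P n k) :
    Tendsto (fun n => (∑ k ∈ range (n + 1) with P n k, a k * b (n - k)) / p n) atTop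
      (𝓝 ((∑' k, a k) * β)) := by
  obtain ⟨M, hM0, hM⟩ := exists_abs_le_mul_of_tendsto_div hp.pos hb
  have hsum_eq : ∀ n, (∑ k ∈ range (n + 1) with P n k, a k * b (n - k)) / p n =
      ∑' k, if P n k then a k * (b (n - k) / p n) else 0 := by
    intro n
    rw [tsum_eq_sum (s := range (n + 1)) fun k hk => if_neg fun hPnk => hk <|
      mem_range.mpr (by have := hP n k hPnk; omega), sum_filter, sum_div]
    exact sum_congr rfl fun k _ => by split_ifs <;> simp [mul_div_assoc]
  simp_rw [hsum_eq, ← tsum_mul_right]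
  refine tendsto_tsum_of_dominated_convergence (bound := fun k => |a k| * (M * A))
    (ha.abs.mul_right _) (fun k => ?_) ?_
  · refine (tendsto_const_nhds.mul (hp.tendsto_sub_div_of_tendsto hb k)).congr' ?_
    filter_upwards [hPk k] with n hn
    rw [if_pos hn]
  · filter_upwards [eventually_ge_atTop 1] with n hn k
    split_ifs with hPnk
    · have h2k := hP n k hPnk
      have hpn := hp.pos n hn
      rw [Real.norm_eq_abs, abs_mul, abs_div, abs_of_pos hpn]
      gcongr
      rw [div_le_iff₀ hpn]
      calc |b (n - k)| ≤ M * p (n - k) := hM _ (by omega)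
        _ ≤ M * (A * p n) := by gcongr; exact hp.le_of_le_two_mul n (n - k) hn (by omega)
        _ = M * A * p n := by ring
    · simpa using mul_nonneg (abs_nonneg (a k)) (mul_nonneg hM0 (zero_le_one.trans hp.one_le))

lemma tendsto_sum_range_mul_div (hp : IsDominatedLongTailed p A) {a b : ℕ → ℝ} {α β : ℝ}
    (ha : Summable a) (hb : Summable b)
    (hpa : Tendsto (fun n => a n / p n) atTop (𝓝 α))
    (hpb : Tendsto (fun n => b n / p n) atTop (𝓝 β)) :
    Tendsto (fun n => (∑ k ∈ range (n + 1), a k * b (n - k)) / p n) atTop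
      (𝓝 ((∑' k, a k) * β + (∑' k, b k) * α)) := by
  simp_rw [sum_range_mul_sub_split, add_div]
  exact (hp.tendsto_sum_filter_mul_div ha hpb _ (fun _ _ => id)
      fun k => eventually_ge_atTop (2 * k)).add
    (hp.tendsto_sum_filter_mul_div hb hpa _ (fun _ _ => le_of_lt)
      fun k => eventually_gt_atTop (2 * k))

lemma tendsto_convPow_div (hp : IsDominatedLongTailed p A)
    (hK : Summable K) (hKp : Tendsto (fun n => K n / p n) atTop (𝓝 c)) (m : ℕ) :
    Tendsto (fun n => convPow K m n / p n) atTop (𝓝 (c * m * (∑' n, K n) ^ (m - 1))) := by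
  induction m with
  | zero =>
    simp only [Nat.cast_zero, mul_zero, zero_mul]
    refine tendsto_const_nhds.congr' ?_
    filter_upwards [eventually_ne_atTop 0] with n hn
    rw [convPow.zero_apply_of_ne_zero K hn, zero_div]
  | succ m ih =>
    rcases m with _ | m
    · simpa [convPow.one_apply] using hKp
    · convert hp.tendsto_sum_range_mul_div ((convPow.summable_norm hK _).of_norm) hK ih hKp
        using 2
      · rfl
      rw [convPow.tsum_eq hK]
      push_cast
      ring

/-- The three terms cover a jump `j ∈ S`, a jump `j ∉ S` with `2 j ≤ n`, and a jump `2 j > n`. -/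
lemma convPow_sub_mul_le (hp : IsDominatedLongTailed p A) (hK : ∀ n, 0 ≤ K n) (hM0 : 0 ≤ M)
    (hM : ∀ n, 1 ≤ n → K n ≤ M * p n) {S : Finset ℕ} {ε : ℝ} (hε : 0 ≤ ε) {n j : ℕ}
    (hn : 1 ≤ n) (hj : j ≤ n) (hS : j ∈ S → j < n ∧ p (n - j) ≤ (1 + ε) * p n) {m : ℕ} {d : ℝ}
    (hd : 0 ≤ d) (hmd : ∀ k, 1 ≤ k → convPow K m k ≤ d * p k) :
    convPow K m (n - j) * K j ≤
      (1 + ε) * d * p n * K j + A * d * p n * (if j ∉ S then K j else 0) +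
        A * M * p n * convPow K m (n - j) := by
  have hA := zero_le_one.trans hp.one_le
  have hpn := hp.pos n hn
  have h1 : 0 ≤ (1 + ε) * d * p n * K j := by have := hK j; positivity
  have h2 : 0 ≤ A * d * p n * (if j ∉ S then K j else 0) := by
    have := hK j; split_ifs <;> positivity
  have h3 : 0 ≤ A * M * p n * convPow K m (n - j) := by
    have := convPow.nonneg hK m (n - j); positivity
  by_cases hjS : j ∈ S
  · obtain ⟨hjn, hpj⟩ := hS hjS
    have : convPow K m (n - j) * K j ≤ (1 + ε) * d * p n * K j := by
      gcongr
      · exact hK j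
      calc convPow K m (n - j) ≤ d * p (n - j) := hmd _ (by omega)
        _ ≤ d * ((1 + ε) * p n) := by gcongr
        _ = _ := by ring
    linarith
  by_cases h2j : 2 * j ≤ n
  · have : convPow K m (n - j) * K j ≤ A * d * p n * (if j ∉ S then K j else 0) := by
      rw [if_pos hjS]
      gcongr
      · exact hK j
      calc convPow K m (n - j) ≤ d * p (n - j) := hmd _ (by omega)
        _ ≤ d * (A * p n) := by gcongr; exact hp.le_of_le_two_mul n _ hn (by omega)
        _ = _ := by ring
    linarith
  · have : convPow K m (n - j) * K j ≤ A * M * p n * convPow K m (n - j) := by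
      rw [mul_comm]
      gcongr
      · exact convPow.nonneg hK m _
      calc K j ≤ M * p j := hM j (by omega)
        _ ≤ M * (A * p n) := by gcongr; exact hp.le_of_le_two_mul n j hn (by omega)
        _ = _ := by ring
    linarith

lemma convPow_succ_le (hp : IsDominatedLongTailed p A) (hK : ∀ n, 0 ≤ K n) (hs : Summable K)
    (hM0 : 0 ≤ M) (hM : ∀ n, 1 ≤ n → K n ≤ M * p n) {S : Finset ℕ} {ε : ℝ}
    (htail : ∀ t : Finset ℕ, Disjoint t S → ∑ j ∈ t, K j ≤ ε) {n : ℕ} (hn : 1 ≤ n)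
    (hS : ∀ j ∈ S, j < n ∧ p (n - j) ≤ (1 + ε) * p n) {m : ℕ} {d : ℝ} (hd : 0 ≤ d)
    (hmd : ∀ k, 1 ≤ k → convPow K m k ≤ d * p k) :
    convPow K (m + 1) n ≤
      (((1 + ε) * ∑' j, K j + A * ε) * d + A * M * (∑' j, K j) ^ m) * p n := by
  have hε : 0 ≤ ε := by simpa using htail ∅ (disjoint_empty_left S)
  have hsumK : ∑ j ∈ range (n + 1), K j ≤ ∑' j, K j :=
    hs.sum_le_tsum _ fun j _ => hK j
  have hsumTail : ∑ j ∈ range (n + 1), (if j ∉ S then K j else 0) ≤ ε := by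
    rw [← sum_filter]
    exact htail _ (disjoint_left.mpr fun _ hj => (mem_filter.mp hj).2)
  have hsumConv : ∑ j ∈ range (n + 1), convPow K m (n - j) ≤ (∑' j, K j) ^ m := by
    rw [sum_flip]
    exact convPow.sum_range_le hK hs m (n + 1)
  have hA := zero_le_one.trans hp.one_le
  have hpn := hp.pos n hn
  calc convPow K (m + 1) n
      ≤ ∑ j ∈ range (n + 1), ((1 + ε) * d * p n * K j + A * d * p n * (if j ∉ S then K j else 0) +
          A * M * p n * convPow K m (n - j)) := by
        rw [convPow.succ_apply_eq_sum_reflect]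
        exact sum_le_sum fun j hj => hp.convPow_sub_mul_le hK hM0 hM hε hn
          (Nat.lt_succ_iff.mp (mem_range.mp hj)) (hS j) hd hmd
    _ = (1 + ε) * d * p n * ∑ j ∈ range (n + 1), K j +
          A * d * p n * ∑ j ∈ range (n + 1), (if j ∉ S then K j else 0) +
          A * M * p n * ∑ j ∈ range (n + 1), convPow K m (n - j) := by
        simp only [sum_add_distrib, mul_sum]
    _ ≤ (1 + ε) * d * p n * ∑' j, K j + A * d * p n * ε + A * M * p n * (∑' j, K j) ^ m := by
        gcongr
    _ = _ := by ring

lemma exists_finset_tail_le (hp : IsDominatedLongTailed p A) (hs : Summable K) {ε : ℝ}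
    (hε : 0 < ε) : ∃ (S : Finset ℕ) (n₀ : ℕ), (∀ t : Finset ℕ, Disjoint t S → ∑ j ∈ t, K j ≤ ε) ∧
      ∀ n ≥ n₀, ∀ j ∈ S, j < n ∧ p (n - j) ≤ (1 + ε) * p n := by
  obtain ⟨S, hS⟩ := hs.vanishing (Iio_mem_nhds hε)
  refine ⟨S, ?_⟩
  suffices ∀ᶠ n in atTop, ∀ j ∈ S, j < n ∧ p (n - j) ≤ (1 + ε) * p n by
    obtain ⟨n₀, hn₀⟩ := eventually_atTop.mp this
    exact ⟨n₀, fun t ht => (hS t ht).le, hn₀⟩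
  refine S.eventually_all.mpr fun j _ => ?_
  filter_upwards [eventually_gt_atTop j, (hp.tendsto_sub_div j).eventually
    (eventually_le_nhds (lt_add_of_pos_right 1 hε))] with n hjn hratio
  exact ⟨hjn, (div_le_iff₀ (hp.pos n (by omega))).mp hratio⟩

lemma exists_convPow_le (hp : IsDominatedLongTailed p A) (hK : ∀ n, 0 ≤ K n) (hs : Summable K)
    (hζ : ∑' n, K n < 1) (hM0 : 0 ≤ M) (hM : ∀ n, 1 ≤ n → K n ≤ M * p n) :
    ∃ B q : ℝ, 0 ≤ q ∧ q < 1 ∧ ∀ m n, 1 ≤ n → convPow K m n ≤ B * m * q ^ m * p n := by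
  set ζ := ∑' n, K n
  have hζ0 : 0 ≤ ζ := tsum_nonneg hK
  have hA := hp.one_le
  obtain ⟨ε, hε, hq1⟩ : ∃ ε > 0, (1 + ε) * ζ + A * ε < 1 := by
    refine ⟨(1 - ζ) / (2 * (1 + A)), div_pos (by linarith) (by linarith), ?_⟩
    have : (1 - ζ) / (2 * (1 + A)) * (1 + A) = (1 - ζ) / 2 := by field_simp
    nlinarith
  set q := (1 + ε) * ζ + A * ε
  have hq : 0 < q := by positivity
  have hζq : ζ ≤ q := by nlinarith
  obtain ⟨S, n₀, hS, hn₀⟩ := hp.exists_finset_tail_le hs hε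
  set B := A * M / q + ∑ n ∈ Ico 1 n₀, (p n)⁻¹
  have hinv : ∀ k ∈ Ico 1 n₀, 0 ≤ (p k)⁻¹ := fun k hk =>
    (inv_pos.mpr (hp.pos k (mem_Ico.mp hk).1)).le
  have hB : 0 ≤ B := add_nonneg (div_nonneg (mul_nonneg (by linarith) hM0) hq.le) (sum_nonneg hinv)
  have hB_small : ∀ n, 1 ≤ n → n < n₀ → 1 ≤ B * p n := by
    intro n hn hnn₀
    rw [← div_le_iff₀ (hp.pos n hn), one_div]
    exact (single_le_sum hinv (mem_Ico.mpr ⟨hn, hnn₀⟩)).trans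
      (le_add_of_nonneg_left (by positivity))
  have hB_large : A * M ≤ B * q := by
    rw [← div_le_iff₀ hq]
    exact le_add_of_nonneg_right (sum_nonneg hinv)
  refine ⟨B, q, hq.le, hq1, fun m => ?_⟩
  induction m with
  | zero =>
    intro n hn
    simp [convPow.zero_apply_of_ne_zero K (by omega : n ≠ 0)]
  | succ m ih =>
    intro n hn
    have hpn := hp.pos n hn
    rcases lt_or_ge n n₀ with hnn₀ | hnn₀
    · calc convPow K (m + 1) n ≤ ζ ^ (m + 1) := convPow.le_pow hK hs _ _
        _ ≤ 1 * q ^ (m + 1) := by rw [one_mul]; gcongr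
        _ ≤ (B * p n) * (m + 1) * q ^ (m + 1) := by
            gcongr
            · exact hB_small n hn hnn₀ |>.trans (le_mul_of_one_le_right (by positivity)
                (by linarith [m.cast_nonneg (α := ℝ)]))
        _ = B * ↑(m + 1) * q ^ (m + 1) * p n := by push_cast; ring
    · calc convPow K (m + 1) n ≤ (((1 + ε) * ζ + A * ε) * (B * m * q ^ m) + A * M * ζ ^ m) * p n :=
          hp.convPow_succ_le hK hs hM0 hM hS hn (hn₀ n hnn₀)
            (by positivity) ih
        _ ≤ (q * (B * m * q ^ m) + B * q * q ^ m) * p n := by gcongr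
        _ = B * ↑(m + 1) * q ^ (m + 1) * p n := by push_cast; ring

theorem tendsto_tsum_convPow_div (hp : IsDominatedLongTailed p A) (hK : ∀ n, 0 ≤ K n)
    (hs : Summable K) (hζ : ∑' n, K n < 1) (hKp : Tendsto (fun n => K n / p n) atTop (𝓝 c)) :
    Tendsto (fun n => (∑' m, convPow K m n) / p n) atTop (𝓝 (c / (1 - ∑' n, K n) ^ 2)) := by
  obtain ⟨M, hM0, hM⟩ := exists_abs_le_mul_of_tendsto_div hp.pos hKp
  obtain ⟨B, q, hq0, hq1, hB⟩ :=
    hp.exists_convPow_le hK hs hζ hM0 fun n hn => (le_abs_self _).trans (hM n hn)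
  have hζ' : ‖∑' n, K n‖ < 1 := by rwa [Real.norm_of_nonneg (tsum_nonneg hK)]
  have hq : ‖q‖ < 1 := by rwa [Real.norm_of_nonneg hq0]
  rw [← mul_one_div, ← (hasSum_nat_mul_pow_sub_one hζ').tsum_eq, ← tsum_mul_left]
  simp_rw [← tsum_div_const, ← mul_assoc]
  refine tendsto_tsum_of_dominated_convergence (bound := fun m => B * m * q ^ m)
    (by simpa [mul_assoc] using (summable_pow_mul_geometric_of_norm_lt_one 1 hq).mul_left B)
    (hp.tendsto_convPow_div hs hKp) ?_
  filter_upwards [eventually_ge_atTop 1] with n hn m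
  rw [Real.norm_of_nonneg (div_nonneg (convPow.nonneg hK m n) (hp.pos n hn).le),
    div_le_iff₀ (hp.pos n hn)]
  exact hB m n hn

end IsDominatedLongTailed

theorem stmt16_general (K : ℕ → ℝ) (hK : ∀ n, 0 ≤ K n)
    (hlt : ∑' n, K n < 1)
    (c γ : ℝ) (hc : 0 < c) (hγ : 0 < γ)
    (htail : Tendsto (fun n : ℕ => K n / (c * (n : ℝ) ^ (-(1 + γ)))) atTop (nhds 1)) :
    Tendsto (fun n : ℕ => (∑' m : ℕ, convPow K m n) / (K n / (1 - ∑' j, K j) ^ 2))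
      atTop (nhds 1) := by
  set p : ℕ → ℝ := fun n => (n : ℝ) ^ (-(1 + γ))
  have hp : IsDominatedLongTailed p (2 ^ (1 + γ)) := .rpow_neg (by linarith)
  have hKp : Tendsto (fun n => K n / p n) atTop (𝓝 c) := by
    refine (mul_one c ▸ htail.const_mul c).congr fun n => ?_
    rw [mul_div_assoc', mul_div_mul_left _ _ hc.ne']
  have hs : Summable K := summable_of_isBigO_nat (Real.summable_nat_rpow.mpr (by linarith))
    (Asymptotics.isBigO_of_div_tendsto_nhds (eventually_ge_atTop 1 |>.mono fun n hn h =>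
      absurd h (hp.pos n hn).ne') c hKp)
  have hlim := ((hp.tendsto_tsum_convPow_div hK hs hlt hKp).mul_const
    ((1 - ∑' j, K j) ^ 2)).div hKp hc.ne'
  rw [div_mul_cancel₀ _ (pow_ne_zero 2 (by linarith)), div_self hc.ne'] at hlim
  refine hlim.congr' ?_
  filter_upwards [eventually_ge_atTop 1] with n hn
  have := (hp.pos n hn).ne'
  rw [Pi.div_apply]
  field_simp

/-- heavy-tailed defective renewal theorem: if `K` has total mass
`ζ ∈ (0,1)` and `K(n) ~ c n^{-1-γ}`, then the renewal mass function
`u(n) = Σ_m K^{*m}(n)` satisfies `u(n) ~ K(n)/(1-ζ)²`. -/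
theorem stmt16 (K : ℕ → ℝ) (hK : ∀ n, 0 ≤ K n) (hK0 : K 0 = 0)
    (hpos : 0 < ∑' n, K n) (hlt : ∑' n, K n < 1)
    (c γ : ℝ) (hc : 0 < c) (hγ : 0 < γ)
    (htail : Tendsto (fun n : ℕ => K n / (c * (n : ℝ) ^ (-(1 + γ)))) atTop (nhds 1)) :
    Tendsto (fun n : ℕ => (∑' m : ℕ, convPow K m n) / (K n / (1 - ∑' j, K j) ^ 2))
      atTop (nhds 1) :=
  stmt16_general K hK hlt c γ hc hγ htail
end
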